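/- arXiv:1402.7094 — 5 statements merged into one kernel-verified Lean document; each statement's English description precedes it below -/
import Mathlib

section
/- There exists an absolute constant C > 0 with the following property: for every probability space (X, 𝓕, μ) with an ergodic measure-preserving transformation T : X → X, and all real-valued G₁, G₂ ∈ L^∞(μ) with ‖G₁‖_∞ ≤ 1 and ‖G₂‖_∞ ≤ 1, one has limsup_{N→∞} ∫ | (1/N) ∑_{n=1}^{N} G₁(T^{n}x) G₂(T^{2n}x) |² dμ(x) ≤ C ⦀G₁⦀₂². -/
/-!
Write `u n = G₁ ∘ Tⁿ · G₂ ∘ T²ⁿ`. The van der Corput inequality in `L²(μ)` bounds the square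
of the average of `u n` by the window-`H` averages of the correlations `∫ u (n + h) u (n + h')`,
up to `O(H/N)`. After the change of variables `y = T^(n+h) x` such a correlation becomes
`∫ F · g ∘ T^(n+h)` with `F = G₁ · G₁ ∘ Tᵏ` and `g = G₂ · G₂ ∘ T²ᵏ`, `k = |h - h'|`; by the mean
ergodic theorem its Cesàro limit is `(∫ F) (∫ g)`, of absolute value at most
`|∫ G₁ · G₁ ∘ Tᵏ|`. Each `k < H` occurs at most `2H` times, and Cauchy–Schwarz turns the
resulting average of `|∫ G₁ · G₁ ∘ Tᵏ|` into the square root of the average of its squares;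
letting `H → ∞` gives the claim with `C = 2`.
-/

open MeasureTheory Filter

/-- The 4th power of the Host–Kra seminorm `⦀f⦀₂`:
`⦀f⦀₂⁴ = lim_{H→∞} (1/H) ∑_{h=1}^H |∫ f·(f∘T^h) dμ|²`. -/
noncomputable def hkSeminorm2pow4 {X : Type*} [MeasurableSpace X] (μ : Measure X)
    (T : X → X) (f : X → ℝ) : ℝ :=
  limsup (fun H : ℕ => (1 / (H : ℝ)) * ∑ h ∈ Finset.Icc 1 H,
    |∫ x, f x * f (T^[h] x) ∂μ| ^ 2) atTop

open Finset Function Topology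

lemma abs_mul_le_one {a b : ℝ} (ha : |a| ≤ 1) (hb : |b| ≤ 1) : |a * b| ≤ 1 := by
  rw [abs_mul]; exact mul_le_one₀ ha (abs_nonneg _) hb

lemma Finset.sum_Icc_one_eq_sum_range {M : Type*} [AddCommMonoid M] (f : ℕ → M) (N : ℕ) :
    ∑ n ∈ Icc 1 N, f n = ∑ n ∈ range N, f (n + 1) := by
  induction N with
  | zero => simp
  | succ N ih => rw [sum_Icc_succ_top (by omega), ih, sum_range_succ]

lemma norm_sum_range_add_sub_sum_range_le {E : Type*} [NormedAddCommGroup E] {a : ℕ → E}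
    (ha : ∀ n, ‖a n‖ ≤ 1) (N k : ℕ) :
    ‖∑ n ∈ range N, a (n + k) - ∑ n ∈ range N, a n‖ ≤ 2 * k := by
  induction k with
  | zero => simp
  | succ k ih =>
    have htel : ∑ n ∈ range N, a (n + (k + 1)) - ∑ n ∈ range N, a (n + k) =
        a (N + k) - a k := by
      simpa [← sum_sub_distrib, add_right_comm, add_assoc] using
        sum_range_sub (fun n => a (n + k)) N
    calc ‖∑ n ∈ range N, a (n + (k + 1)) - ∑ n ∈ range N, a n‖
        = ‖(a (N + k) - a k) + (∑ n ∈ range N, a (n + k) - ∑ n ∈ range N, a n)‖ := by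
          rw [← htel, sub_add_sub_cancel]
      _ ≤ (1 + 1) + 2 * k := (norm_add_le _ _).trans
          (add_le_add ((norm_sub_le _ _).trans (add_le_add (ha _) (ha _))) ih)
      _ = 2 * ↑(k + 1) := by push_cast; ring

lemma norm_avg_le {E : Type*} [NormedAddCommGroup E] [NormedSpace ℝ E] {b : ℕ → E} {M : ℝ}
    (hM : 0 ≤ M) {N : ℕ} (hb : ∀ n ∈ range N, ‖b n‖ ≤ M) :
    ‖(N : ℝ)⁻¹ • ∑ n ∈ range N, b n‖ ≤ M := by
  rcases N.eq_zero_or_pos with rfl | hN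
  · simpa using hM
  rw [norm_smul, norm_inv, Real.norm_natCast, inv_mul_le_iff₀ (by positivity)]
  simpa using (norm_sum_le _ _).trans (sum_le_card_nsmul _ _ _ hb)

lemma sq_avg_le_avg_sq (c : ℕ → ℝ) (N : ℕ) :
    ((N : ℝ)⁻¹ * ∑ n ∈ range N, c n) ^ 2 ≤ (N : ℝ)⁻¹ * ∑ n ∈ range N, c n ^ 2 := by
  rcases N.eq_zero_or_pos with rfl | hN
  · simp
  have hCS : (∑ n ∈ range N, c n) ^ 2 ≤ N * ∑ n ∈ range N, c n ^ 2 := by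
    simpa using sq_sum_le_card_mul_sum_sq (s := range N) (f := c)
  calc ((N : ℝ)⁻¹ * ∑ n ∈ range N, c n) ^ 2 = (N : ℝ)⁻¹ ^ 2 * (∑ n ∈ range N, c n) ^ 2 := by
        ring
    _ ≤ (N : ℝ)⁻¹ ^ 2 * (N * ∑ n ∈ range N, c n ^ 2) := by gcongr
    _ = (N : ℝ)⁻¹ * ∑ n ∈ range N, c n ^ 2 := by field_simp

lemma Filter.Tendsto.avg_comp_add {c : ℕ → ℝ} (hc : ∀ n, |c n| ≤ 1) {L : ℝ}
    (h : Tendsto (fun N : ℕ => (N : ℝ)⁻¹ * ∑ n ∈ range N, c n) atTop (𝓝 L)) (m : ℕ) :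
    Tendsto (fun N : ℕ => (N : ℝ)⁻¹ * ∑ n ∈ range N, c (n + m)) atTop (𝓝 L) := by
  have hdiff : Tendsto (fun N : ℕ => (N : ℝ)⁻¹ * ∑ n ∈ range N, c (n + m)
      - (N : ℝ)⁻¹ * ∑ n ∈ range N, c n) atTop (𝓝 0) := by
    refine squeeze_zero_norm (fun N => ?_) (tendsto_const_div_atTop_nhds_zero_nat (2 * m : ℝ))
    rw [← mul_sub, norm_mul, norm_inv, Real.norm_natCast, inv_mul_eq_div]
    gcongr
    exact norm_sum_range_add_sub_sum_range_le hc N m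
  simpa using hdiff.add h

lemma sum_range_dist_le {c : ℕ → ℝ} (hc : ∀ k, 0 ≤ c k) {H h : ℕ} (hh : h < H) :
    ∑ h' ∈ range H, c (h.dist h') ≤ 2 * ∑ k ∈ range H, c k := by
  rw [sum_comp, mul_sum]
  calc ∑ k ∈ (range H).image h.dist, #{h' ∈ range H | h.dist h' = k} • c k
      ≤ ∑ k ∈ (range H).image h.dist, 2 * c k := sum_le_sum fun k _ => by
        have hfiber : {h' ∈ range H | h.dist h' = k} ⊆ {h + k, h - k} := fun h' hh' => by
          simp only [mem_filter, mem_range] at hh'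
          unfold Nat.dist at hh'
          simp only [mem_insert, mem_singleton]
          omega
        rw [nsmul_eq_mul]
        gcongr
        · exact hc k
        · exact_mod_cast (card_le_card hfiber).trans card_le_two
    _ ≤ ∑ k ∈ range H, 2 * c k := by
        refine sum_le_sum_of_subset_of_nonneg (image_subset_iff.2 fun h' hh' => ?_)
          fun k _ _ => mul_nonneg zero_le_two (hc k)
        simp only [mem_range] at hh' ⊢
        unfold Nat.dist
        omega

lemma sum_range_product_dist_le {c : ℕ → ℝ} (hc : ∀ k, 0 ≤ c k) (H : ℕ) :
    ∑ p ∈ range H ×ˢ range H, c (p.1.dist p.2) ≤ 2 * H * ∑ k ∈ range H, c k := by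
  rw [sum_product]
  calc ∑ h ∈ range H, ∑ h' ∈ range H, c (h.dist h')
      ≤ ∑ _h ∈ range H, 2 * ∑ k ∈ range H, c k :=
        sum_le_sum fun h hh => sum_range_dist_le hc (mem_range.1 hh)
    _ = 2 * H * ∑ k ∈ range H, c k := by rw [sum_const, card_range, nsmul_eq_mul]; ring

lemma sum_mul_dist_le_two_mul_sqrt {c d : ℕ → ℝ} (hc : ∀ k, |c k| ≤ 1) (hd : ∀ k, |d k| ≤ 1)
    {H : ℕ} (hH : 0 < H) :
    (H : ℝ)⁻¹ ^ 2 * ∑ p ∈ range H ×ˢ range H, c (p.1.dist p.2) * d (p.1.dist p.2)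
      ≤ 2 * √((H : ℝ)⁻¹ + 1 / H * ∑ k ∈ Icc 1 H, |c k| ^ 2) := by
  have hsq : ∑ k ∈ range H, |c k| ^ 2 ≤ 1 + ∑ k ∈ Icc 1 H, |c k| ^ 2 := by
    rw [sum_Icc_one_eq_sum_range]
    calc ∑ k ∈ range H, |c k| ^ 2 ≤ ∑ k ∈ range (H + 1), |c k| ^ 2 :=
          sum_le_sum_of_subset_of_nonneg (range_subset_range.2 H.le_succ)
            fun _ _ _ => sq_nonneg _
      _ = ∑ k ∈ range H, |c (k + 1)| ^ 2 + |c 0| ^ 2 := sum_range_succ' _ _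
      _ ≤ 1 + ∑ k ∈ range H, |c (k + 1)| ^ 2 := by nlinarith [hc 0, abs_nonneg (c 0)]
  calc (H : ℝ)⁻¹ ^ 2 * ∑ p ∈ range H ×ˢ range H, c (p.1.dist p.2) * d (p.1.dist p.2)
      ≤ (H : ℝ)⁻¹ ^ 2 * ∑ p ∈ range H ×ˢ range H, |c (p.1.dist p.2)| := by
        gcongr with p
        refine (le_abs_self _).trans ?_
        rw [abs_mul]
        exact mul_le_of_le_one_right (abs_nonneg _) (hd _)
    _ ≤ (H : ℝ)⁻¹ ^ 2 * (2 * H * ∑ k ∈ range H, |c k|) := by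
        gcongr
        exact sum_range_product_dist_le (fun k => abs_nonneg _) H
    _ = 2 * ((H : ℝ)⁻¹ * ∑ k ∈ range H, |c k|) := by field_simp
    _ ≤ 2 * √((H : ℝ)⁻¹ * ∑ k ∈ range H, |c k| ^ 2) := by
        gcongr
        exact (le_abs_self _).trans (Real.abs_le_sqrt (sq_avg_le_avg_sq _ H))
    _ ≤ 2 * √((H : ℝ)⁻¹ + 1 / H * ∑ k ∈ Icc 1 H, |c k| ^ 2) := by
        gcongr
        calc (H : ℝ)⁻¹ * ∑ k ∈ range H, |c k| ^ 2
            ≤ (H : ℝ)⁻¹ * (1 + ∑ k ∈ Icc 1 H, |c k| ^ 2) := by gcongr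
          _ = (H : ℝ)⁻¹ + 1 / H * ∑ k ∈ Icc 1 H, |c k| ^ 2 := by ring

lemma le_mul_sqrt_limsup_of_le {s : ℕ → ℝ} (hs : IsBoundedUnder (· ≤ ·) atTop s) {L C : ℝ}
    (hC : 0 ≤ C) (h : ∀ H : ℕ, 0 < H → L ≤ C * √((H : ℝ)⁻¹ + s H)) :
    L ≤ C * √(limsup s atTop) := by
  have hε : ∀ ε > 0, L ≤ C * √(limsup s atTop + 2 * ε) := fun ε hε => by
    obtain ⟨H, hsH, hHε, hH⟩ := ((eventually_lt_of_limsup_lt (lt_add_of_pos_right _ hε) hs).and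
      ((tendsto_inv_atTop_nhds_zero_nat.eventually (gt_mem_nhds hε)).and
        (eventually_gt_atTop 0))).exists
    calc L ≤ C * √((H : ℝ)⁻¹ + s H) := h H hH
      _ ≤ C * √(limsup s atTop + 2 * ε) :=
          mul_le_mul_of_nonneg_left (Real.sqrt_le_sqrt (by linarith)) hC
  have hcont : Continuous fun ε : ℝ => C * √(limsup s atTop + 2 * ε) := by fun_prop
  refine ge_of_tendsto (x := 𝓝[>] (0 : ℝ)) ?_ (eventually_nhdsWithin_of_forall hε)
  simpa using (hcont.tendsto 0).mono_left nhdsWithin_le_nhds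

lemma isBoundedUnder_avg_sq_Icc {c : ℕ → ℝ} (hc : ∀ k, |c k| ≤ 1) :
    IsBoundedUnder (· ≤ ·) atTop fun H : ℕ => 1 / (H : ℝ) * ∑ k ∈ Icc 1 H, |c k| ^ 2 := by
  refine isBoundedUnder_of ⟨1, fun H => ?_⟩
  have := norm_avg_le zero_le_one (N := H) (b := fun k => |c (k + 1)| ^ 2)
    fun k _ => by simpa using hc (k + 1)
  simpa [sum_Icc_one_eq_sum_range, abs_of_nonneg] using (le_abs_self _).trans this

lemma norm_avg_sub_avg_windowAvg_le {E : Type*} [NormedAddCommGroup E] [NormedSpace ℝ E]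
    {a : ℕ → E} (ha : ∀ n, ‖a n‖ ≤ 1) {H : ℕ} (hH : 0 < H) (N : ℕ) :
    ‖(N : ℝ)⁻¹ • ∑ n ∈ range N, a n -
        (N : ℝ)⁻¹ • ∑ n ∈ range N, (H : ℝ)⁻¹ • ∑ h ∈ range H, a (n + h)‖ ≤ 2 * H / N := by
  have hsplit : (N : ℝ)⁻¹ • ∑ n ∈ range N, a n -
      (N : ℝ)⁻¹ • ∑ n ∈ range N, (H : ℝ)⁻¹ • ∑ h ∈ range H, a (n + h) =
      (H : ℝ)⁻¹ • ∑ h ∈ range H,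
        (N : ℝ)⁻¹ • (∑ n ∈ range N, a n - ∑ n ∈ range N, a (n + h)) := by
    simp only [smul_sub, sum_sub_distrib, sum_const, card_range, ← smul_sum,
      smul_comm (N : ℝ)⁻¹ (H : ℝ)⁻¹]
    rw [sum_comm, ← Nat.cast_smul_eq_nsmul ℝ, inv_smul_smul₀ (by positivity)]
  rw [hsplit]
  refine norm_avg_le (by positivity) fun h hh => ?_
  have hhH : (h : ℝ) ≤ H := by exact_mod_cast (mem_range.1 hh).le
  rw [norm_smul, norm_sub_rev, norm_inv, Real.norm_natCast, inv_mul_eq_div]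
  gcongr
  exact (norm_sum_range_add_sub_sum_range_le ha N h).trans (by linarith)

theorem norm_avg_sq_le_vanDerCorput {E : Type*} [NormedAddCommGroup E] [InnerProductSpace ℝ E]
    {a : ℕ → E} (ha : ∀ n, ‖a n‖ ≤ 1) {H : ℕ} (hH : 0 < H) (N : ℕ) :
    ‖(N : ℝ)⁻¹ • ∑ n ∈ range N, a n‖ ^ 2 ≤
      (H : ℝ)⁻¹ ^ 2 * ∑ p ∈ range H ×ˢ range H,
          (N : ℝ)⁻¹ * ∑ n ∈ range N, inner ℝ (a (n + p.1)) (a (n + p.2))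
        + (4 * H / N + (2 * H / N) ^ 2) := by
  set A := (N : ℝ)⁻¹ • ∑ n ∈ range N, a n
  set v : ℕ → E := fun n => (H : ℝ)⁻¹ • ∑ h ∈ range H, a (n + h)
  set B := (N : ℝ)⁻¹ • ∑ n ∈ range N, v n
  have hB : ‖B‖ ≤ 1 :=
    norm_avg_le zero_le_one fun n _ => norm_avg_le zero_le_one fun h _ => ha _
  have hA : ‖A‖ ≤ ‖B‖ + 2 * H / N :=
    (norm_le_norm_add_norm_sub' A B).trans (by gcongr; exact norm_avg_sub_avg_windowAvg_le ha hH N)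
  have hBsq : ‖B‖ ^ 2 ≤ (N : ℝ)⁻¹ * ∑ n ∈ range N, ‖v n‖ ^ 2 := by
    have hBle : ‖B‖ ≤ (N : ℝ)⁻¹ * ∑ n ∈ range N, ‖v n‖ := by
      rw [norm_smul, norm_inv, Real.norm_natCast]
      gcongr
      exact norm_sum_le _ _
    exact (pow_le_pow_left₀ (norm_nonneg _) hBle 2).trans (sq_avg_le_avg_sq _ N)
  have hv_sq : ∀ n, ‖v n‖ ^ 2 = (H : ℝ)⁻¹ ^ 2 *
      ∑ p ∈ range H ×ˢ range H, inner ℝ (a (n + p.1)) (a (n + p.2)) := fun n => by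
    rw [← real_inner_self_eq_norm_sq, real_inner_smul_left, real_inner_smul_right, sum_product,
      sum_inner]
    simp only [inner_sum]
    ring
  calc ‖A‖ ^ 2 ≤ ‖B‖ ^ 2 + (4 * H / N + (2 * H / N) ^ 2) := by
        have hδ : (0 : ℝ) ≤ 2 * H / N := by positivity
        rw [show (4 : ℝ) * H / N = 2 * (2 * H / N) by ring]
        nlinarith [pow_le_pow_left₀ (norm_nonneg _) hA 2]
    _ ≤ (N : ℝ)⁻¹ * ∑ n ∈ range N, ‖v n‖ ^ 2 + (4 * H / N + (2 * H / N) ^ 2) := by gcongr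
    _ = _ := by
        simp only [hv_sq, mul_sum]
        rw [sum_comm]
        congr 1
        refine sum_congr rfl fun p _ => sum_congr rfl fun n _ => by ring

section DoubleAvgTerm

variable {X : Type*} {T : X → X} {G₁ G₂ : X → ℝ}

def doubleAvgTerm (T : X → X) (G₁ G₂ : X → ℝ) (n : ℕ) (x : X) : ℝ :=
  G₁ (T^[n] x) * G₂ (T^[2 * n] x)

lemma doubleAvgTerm_mul_doubleAvgTerm_add (j k : ℕ) (x : X) :
    doubleAvgTerm T G₁ G₂ j x * doubleAvgTerm T G₁ G₂ (j + k) x =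
      (G₁ (T^[j] x) * G₁ (T^[k] (T^[j] x))) *
        (G₂ (T^[j] (T^[j] x)) * G₂ (T^[2 * k] (T^[j] (T^[j] x)))) := by
  simp only [doubleAvgTerm, ← iterate_add_apply]
  ring_nf

lemma abs_doubleAvgTerm_le_one (hb₁ : ∀ x, |G₁ x| ≤ 1) (hb₂ : ∀ x, |G₂ x| ≤ 1) (n : ℕ) (x : X) :
    |doubleAvgTerm T G₁ G₂ n x| ≤ 1 :=
  abs_mul_le_one (hb₁ _) (hb₂ _)

end DoubleAvgTerm

section MeasureSpace

variable {X : Type*} [MeasurableSpace X] {μ : Measure X}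

lemma MeasureTheory.MeasurePreserving.integral_comp_of_aestronglyMeasurable {Y E : Type*}
    [MeasurableSpace Y] [NormedAddCommGroup E] [NormedSpace ℝ E] {ν : Measure Y} {f : X → Y}
    (hf : MeasurePreserving f μ ν) {g : Y → E} (hg : AEStronglyMeasurable g ν) :
    ∫ x, g (f x) ∂μ = ∫ y, g y ∂ν := by
  have h := integral_map (f := g) hf.aemeasurable (by rwa [hf.map_eq])
  rwa [hf.map_eq, eq_comm] at h

lemma MeasureTheory.L2.inner_const_left [IsFiniteMeasure μ] (c : ℝ) (f : Lp ℝ 2 μ) :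
    inner ℝ (Lp.const 2 μ c) f = c * ∫ x, f x ∂μ := by
  rw [← indicatorConstLp_univ, L2.inner_indicatorConstLp_eq_inner_setIntegral ℝ, setIntegral_univ]
  simp [mul_comm]

variable [IsProbabilityMeasure μ]

lemma abs_integral_le_one {f : X → ℝ} (hf : ∀ x, |f x| ≤ 1) : |∫ x, f x ∂μ| ≤ 1 := by
  simpa using norm_integral_le_of_norm_le_const (μ := μ) (f := f) (C := 1) (ae_of_all _ hf)

theorem integral_sq_avg_le_vanDerCorput {u : ℕ → X → ℝ} (hu : ∀ n, Measurable (u n))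
    (hu1 : ∀ n x, |u n x| ≤ 1) {H : ℕ} (hH : 0 < H) (N : ℕ) :
    ∫ x, |(N : ℝ)⁻¹ * ∑ n ∈ range N, u n x| ^ 2 ∂μ ≤
      (H : ℝ)⁻¹ ^ 2 * ∑ p ∈ range H ×ˢ range H,
          (N : ℝ)⁻¹ * ∑ n ∈ range N, ∫ x, u (n + p.1) x * u (n + p.2) x ∂μ
        + (4 * H / N + (2 * H / N) ^ 2) := by
  have hint : ∀ m m', Integrable (fun x => u m x * u m' x) μ := fun m m' =>
    .of_bound ((hu m).mul (hu m')).aestronglyMeasurable 1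
      (ae_of_all _ fun x => abs_mul_le_one (hu1 m x) (hu1 m' x))
  have hpt : ∀ x, |(N : ℝ)⁻¹ * ∑ n ∈ range N, u n x| ^ 2 ≤
      (H : ℝ)⁻¹ ^ 2 * ∑ p ∈ range H ×ˢ range H,
          (N : ℝ)⁻¹ * ∑ n ∈ range N, u (n + p.1) x * u (n + p.2) x
        + (4 * H / N + (2 * H / N) ^ 2) := fun x => by
    have := norm_avg_sq_le_vanDerCorput (a := fun n => u n x) (hu1 · x) hH N
    simpa only [Real.norm_eq_abs, smul_eq_mul, RCLike.inner_apply', conj_trivial] using this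
  have hint_corr : ∀ p : ℕ × ℕ, Integrable
      (fun x => (N : ℝ)⁻¹ * ∑ n ∈ range N, u (n + p.1) x * u (n + p.2) x) μ := fun p =>
    (integrable_finsetSum _ fun n _ => hint _ _).const_mul _
  have hint_rhs : Integrable (fun x => (H : ℝ)⁻¹ ^ 2 * ∑ p ∈ range H ×ˢ range H,
      (N : ℝ)⁻¹ * ∑ n ∈ range N, u (n + p.1) x * u (n + p.2) x) μ :=
    (integrable_finsetSum _ fun p _ => hint_corr p).const_mul _
  refine (integral_mono_of_nonneg (ae_of_all _ fun x => by positivity)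
    (hint_rhs.add (integrable_const _)) (ae_of_all _ hpt)).trans_eq ?_
  simp only [Pi.add_apply]
  rw [integral_add hint_rhs (integrable_const _), integral_const_mul,
    integral_finsetSum _ fun p _ => hint_corr p, integral_const, probReal_univ, one_smul]
  congr 2
  refine sum_congr rfl fun p _ => ?_
  rw [integral_const_mul, integral_finsetSum _ fun n _ => hint _ _]

variable {T : X → X}

lemma Ergodic.tendsto_birkhoffAverage_compMeasurePreserving (hT : Ergodic T μ) (f : Lp ℝ 2 μ) :
    Tendsto (birkhoffAverage ℝ (Lp.compMeasurePreserving T hT.toMeasurePreserving) id · f)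
      atTop (𝓝 (Lp.const 2 μ (∫ x, f x ∂μ))) := by
  set U : Lp ℝ 2 μ →L[ℝ] Lp ℝ 2 μ :=
    (Lp.compMeasurePreservingₗᵢ ℝ T hT.toMeasurePreserving).toContinuousLinearMap
  have hfixed : ∀ w, w ∈ U.eqLocus (1 : Lp ℝ 2 μ →L[ℝ] Lp ℝ 2 μ) ↔
      Lp.compMeasurePreserving T hT.toMeasurePreserving w = w := fun w => Iff.rfl
  -- By ergodicity the fixed vectors of `U` are the constants, and `f - ∫ f` is orthogonal to them.
  have hproj : (U.eqLocus (1 : Lp ℝ 2 μ →L[ℝ] Lp ℝ 2 μ)).starProjection f =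
      Lp.const 2 μ (∫ x, f x ∂μ) := by
    refine Submodule.eq_starProjection_of_mem_of_inner_eq_zero ((hfixed _).2 rfl) fun w hw => ?_
    obtain ⟨c, hc⟩ :=
      hT.eq_const_of_compMeasurePreserving_eq (congrArg Subtype.val ((hfixed w).1 hw))
    rw [show w = Lp.const 2 μ c from Subtype.ext hc, real_inner_comm, inner_sub_right,
      L2.inner_const_left, L2.inner_const_left]
    simp
  rw [← hproj]
  exact U.tendsto_birkhoffAverage_orthogonalProjection
    (LinearIsometry.norm_toContinuousLinearMap_le _) f

lemma Ergodic.tendsto_avg_integral_mul_comp_iterate (hT : Ergodic T μ) {F g : X → ℝ}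
    (hF : MemLp F 2 μ) (hg : MemLp g 2 μ) :
    Tendsto (fun N : ℕ => (N : ℝ)⁻¹ * ∑ i ∈ range N, ∫ x, F x * g (T^[i] x) ∂μ)
      atTop (𝓝 ((∫ x, F x ∂μ) * ∫ x, g x ∂μ)) := by
  have hlim := (tendsto_const_nhds (x := hF.toLp F)).inner (𝕜 := ℝ)
    (hT.tendsto_birkhoffAverage_compMeasurePreserving (hg.toLp g))
  rw [real_inner_comm, L2.inner_const_left, integral_congr_ae hF.coeFn_toLp,
    integral_congr_ae hg.coeFn_toLp, mul_comm] at hlim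
  refine hlim.congr fun N => ?_
  simp only [birkhoffAverage, birkhoffSum, inner_smul_right, inner_sum, id,
    Lp.compMeasurePreserving_iterate, L2.inner_def]
  congr 1
  refine sum_congr rfl fun i _ => integral_congr_ae ?_
  have hTi := hT.toMeasurePreserving.iterate i
  filter_upwards [hF.coeFn_toLp, Lp.coeFn_compMeasurePreserving (hg.toLp g) hTi,
    hTi.quasiMeasurePreserving.ae_eq_comp hg.coeFn_toLp] with x hFx hgTx hgx
  rw [hFx, hgTx, hgx]
  simp [mul_comm]

noncomputable def autocorrelation (μ : Measure X) (T : X → X) (f : X → ℝ) (k : ℕ) : ℝ :=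
  ∫ x, f x * f (T^[k] x) ∂μ

lemma abs_autocorrelation_le_one {f : X → ℝ} (hf : ∀ x, |f x| ≤ 1) (k : ℕ) :
    |autocorrelation μ T f k| ≤ 1 :=
  abs_integral_le_one fun x => abs_mul_le_one (hf x) (hf _)

variable {G₁ G₂ : X → ℝ}

lemma measurable_doubleAvgTerm (hT : Measurable T) (hG₁ : Measurable G₁) (hG₂ : Measurable G₂)
    (n : ℕ) : Measurable (doubleAvgTerm T G₁ G₂ n) :=
  (hG₁.comp (hT.iterate n)).mul (hG₂.comp (hT.iterate (2 * n)))

theorem Ergodic.tendsto_avg_integral_doubleAvgTerm_mul (hT : Ergodic T μ)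
    (hG₁ : Measurable G₁) (hG₂ : Measurable G₂)
    (hb₁ : ∀ x, |G₁ x| ≤ 1) (hb₂ : ∀ x, |G₂ x| ≤ 1) (m k : ℕ) :
    Tendsto (fun N : ℕ => (N : ℝ)⁻¹ * ∑ n ∈ range N,
        ∫ x, doubleAvgTerm T G₁ G₂ (n + m) x * doubleAvgTerm T G₁ G₂ (n + m + k) x ∂μ)
      atTop (𝓝 (autocorrelation μ T G₁ k * autocorrelation μ T G₂ (2 * k))) := by
  set F : X → ℝ := fun y => G₁ y * G₁ (T^[k] y)
  set g : X → ℝ := fun y => G₂ y * G₂ (T^[2 * k] y)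
  have hFm : Measurable F := hG₁.mul (hG₁.comp (hT.measurable.iterate k))
  have hgm : Measurable g := hG₂.mul (hG₂.comp (hT.measurable.iterate (2 * k)))
  have hFb : ∀ y, |F y| ≤ 1 := fun y => abs_mul_le_one (hb₁ _) (hb₁ _)
  have hgb : ∀ y, |g y| ≤ 1 := fun y => abs_mul_le_one (hb₂ _) (hb₂ _)
  have hmet := hT.tendsto_avg_integral_mul_comp_iterate
    (.of_bound hFm.aestronglyMeasurable 1 (ae_of_all _ hFb))
    (.of_bound hgm.aestronglyMeasurable 1 (ae_of_all _ hgb))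
  have hcorr_le : ∀ j, |∫ y, F y * g (T^[j] y) ∂μ| ≤ 1 := fun j =>
    abs_integral_le_one fun y => abs_mul_le_one (hFb y) (hgb _)
  refine (hmet.avg_comp_add hcorr_le m).congr fun N => ?_
  congr 1
  refine sum_congr rfl fun n _ => ?_
  simp only [doubleAvgTerm_mul_doubleAvgTerm_add]
  exact ((hT.toMeasurePreserving.iterate (n + m)).integral_comp_of_aestronglyMeasurable
    (hFm.mul (hgm.comp (hT.measurable.iterate (n + m)))).aestronglyMeasurable).symm

theorem Ergodic.tendsto_avg_integral_doubleAvgTerm_mul_dist (hT : Ergodic T μ)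
    (hG₁ : Measurable G₁) (hG₂ : Measurable G₂)
    (hb₁ : ∀ x, |G₁ x| ≤ 1) (hb₂ : ∀ x, |G₂ x| ≤ 1) (m m' : ℕ) :
    Tendsto (fun N : ℕ => (N : ℝ)⁻¹ * ∑ n ∈ range N,
        ∫ x, doubleAvgTerm T G₁ G₂ (n + m) x * doubleAvgTerm T G₁ G₂ (n + m') x ∂μ)
      atTop (𝓝 (autocorrelation μ T G₁ (m.dist m') * autocorrelation μ T G₂ (2 * m.dist m'))) := by
  rcases le_total m m' with h | h
  · obtain ⟨k, rfl⟩ := Nat.exists_eq_add_of_le h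
    simpa [Nat.dist_eq_sub_of_le h, add_assoc] using
      hT.tendsto_avg_integral_doubleAvgTerm_mul hG₁ hG₂ hb₁ hb₂ m k
  · obtain ⟨k, rfl⟩ := Nat.exists_eq_add_of_le h
    simpa [Nat.dist_eq_sub_of_le_right h, add_assoc, mul_comm] using
      hT.tendsto_avg_integral_doubleAvgTerm_mul hG₁ hG₂ hb₁ hb₂ m' k

theorem Ergodic.limsup_integral_sq_avg_le (hT : Ergodic T μ)
    (hG₁ : Measurable G₁) (hG₂ : Measurable G₂)
    (hb₁ : ∀ x, |G₁ x| ≤ 1) (hb₂ : ∀ x, |G₂ x| ≤ 1) {H : ℕ} (hH : 0 < H) :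
    limsup (fun N : ℕ =>
        ∫ x, |1 / (N : ℝ) * ∑ n ∈ Icc 1 N, doubleAvgTerm T G₁ G₂ n x| ^ 2 ∂μ) atTop
      ≤ (H : ℝ)⁻¹ ^ 2 * ∑ p ∈ range H ×ˢ range H,
          autocorrelation μ T G₁ (p.1.dist p.2) * autocorrelation μ T G₂ (2 * p.1.dist p.2) := by
  -- Summing over `Icc 1 N` is summing over `range N` after the shift `n ↦ n + 1`.
  have hvdc := fun N => integral_sq_avg_le_vanDerCorput (μ := μ)
    (fun n => measurable_doubleAvgTerm hT.measurable hG₁ hG₂ (n + 1))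
    (fun n => abs_doubleAvgTerm_le_one hb₁ hb₂ (n + 1)) hH N
  have hcorr : ∀ p : ℕ × ℕ, Tendsto (fun N : ℕ => (N : ℝ)⁻¹ * ∑ n ∈ range N,
      ∫ x, doubleAvgTerm T G₁ G₂ (n + p.1 + 1) x * doubleAvgTerm T G₁ G₂ (n + p.2 + 1) x ∂μ)
      atTop (𝓝 (autocorrelation μ T G₁ (p.1.dist p.2) *
        autocorrelation μ T G₂ (2 * p.1.dist p.2))) := fun p => by
    simpa [Nat.dist_add_add_right, add_assoc] using
      hT.tendsto_avg_integral_doubleAvgTerm_mul_dist hG₁ hG₂ hb₁ hb₂ (p.1 + 1) (p.2 + 1)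
  have herr : Tendsto (fun N : ℕ => 4 * (H : ℝ) / N + (2 * H / N) ^ 2) atTop (𝓝 0) := by
    simpa using (tendsto_const_div_atTop_nhds_zero_nat (4 * H : ℝ)).add
      ((tendsto_const_div_atTop_nhds_zero_nat (2 * H : ℝ)).pow 2)
  have hlim := ((tendsto_finsetSum (range H ×ˢ range H) fun p _ => hcorr p).const_mul
    ((H : ℝ)⁻¹ ^ 2)).add herr
  rw [add_zero] at hlim
  refine (limsup_le_limsup (.of_forall fun N => ?_) (isCoboundedUnder_le_of_le atTop
    fun N => integral_nonneg fun x => sq_nonneg _) hlim.isBoundedUnder_le).trans_eq hlim.limsup_eq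
  simpa only [one_div, sum_Icc_one_eq_sum_range] using hvdc N

end MeasureSpace

/-- there is an absolute constant `C > 0` such that for every ergodic system and
all `G₁, G₂` bounded by 1,
`limsup_N ∫ |(1/N) ∑_{n=1}^N G₁(Tⁿx) G₂(T²ⁿx)|² dμ ≤ C ⦀G₁⦀₂²`
(here `⦀G₁⦀₂² = (⦀G₁⦀₂⁴)^{1/2}`). -/
theorem limsup_integral_sq_avg_le_seminorm2 :
    ∃ C : ℝ, 0 < C ∧
      ∀ {X : Type} [MeasurableSpace X] (μ : Measure X), ∀ [IsProbabilityMeasure μ],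
      ∀ (T : X → X), Ergodic T μ →
      ∀ (G₁ G₂ : X → ℝ), Measurable G₁ → Measurable G₂ →
        (∀ x, |G₁ x| ≤ 1) → (∀ x, |G₂ x| ≤ 1) →
        limsup (fun N : ℕ =>
          ∫ x, |(1 / (N : ℝ)) * ∑ n ∈ Finset.Icc 1 N, G₁ (T^[n] x) * G₂ (T^[2 * n] x)| ^ 2 ∂μ)
            atTop
          ≤ C * Real.sqrt (hkSeminorm2pow4 μ T G₁) := by
  refine ⟨2, two_pos, fun μ _ T hT G₁ G₂ hG₁ hG₂ hb₁ hb₂ => ?_⟩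
  refine le_mul_sqrt_limsup_of_le (isBoundedUnder_avg_sq_Icc (abs_autocorrelation_le_one hb₁))
    zero_le_two fun H hH => ?_
  exact (hT.limsup_integral_sq_avg_le hG₁ hG₂ hb₁ hb₂ hH).trans
    (sum_mul_dist_le_two_mul_sqrt (abs_autocorrelation_le_one hb₁)
      (fun k => abs_autocorrelation_le_one hb₂ (2 * k)) hH)
end

section
/- Let (Y, 𝓖, ν) be a probability space, U : Y → Y a measure-preserving transformation, and f ∈ L^∞(ν) real-valued. If ∫ limsup_{N→∞} sup_{t∈ℝ} | (1/N) ∑_{n=1}^{N} f(U^{n}y) e^{2πint} | dν(y) = 0, then lim_{N→∞} (1/N) ∑_{n=1}^{N} | ∫ f·(f∘U^{n}) dν |² = 0. -/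
/-!
Write `c n = ∫ f · (f ∘ Uⁿ) dν` and `e(x) = exp (2πix)`. The weights
`F(t) = ∫ |∑_{k=1}^{K} f(Uᵏy) e(kt)|² dν(y)` are a discrete stand-in for the spectral measure
of `f`: by invariance of `ν` and orthogonality of the characters of `ℤ/L`, their sampled Fourier
coefficients are `∑_{j<L} e(-nj/L) F(j/L) = L (K - n) c n` whenever `K + n ≤ L`.
Pair `F` with `A(t) = ∑_{n=1}^{N} c n e(nt) = ∫ f(y) ∑_{n=1}^{N} f(Uⁿy) e(nt) dν(y)`, which is
bounded by `N ‖f‖_∞ ∫ G_N`, `G_N` being the Wiener–Wintner supremum. With `K = 2N`, `L = 3N`: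
`L N ∑ c n² ≤ L ∑ (K - n) c n² = |∑_j conj (A(j/L)) F(j/L)| ≤ N ‖f‖_∞ (∫ G_N) · L K c 0`,
so `(1/N) ∑_{n=1}^{N} c n² ≤ 2 ‖f‖_∞ c 0 ∫ G_N`. Finally `∫ G_N → 0` by dominated convergence,
since `limsup G_N ≥ 0` has integral zero.
-/

open MeasureTheory Filter Complex Finset
open scoped Real Topology ComplexConjugate

noncomputable def wave (m : ℤ) (t : ℝ) : ℂ := exp (2 * π * I * m * t)

lemma wave_add (a b : ℤ) (t : ℝ) : wave (a + b) t = wave a t * wave b t := by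
  rw [wave, wave, wave, ← exp_add]
  push_cast
  ring_nf

lemma conj_wave (m : ℤ) (t : ℝ) : conj (wave m t) = wave (-m) t := by
  rw [wave, wave, ← exp_conj]
  simp only [map_mul, map_ofNat, conj_ofReal, conj_I, map_intCast]
  push_cast
  ring_nf

lemma wave_zero (t : ℝ) : wave 0 t = 1 := by
  simp [wave]

lemma norm_wave (m : ℤ) (t : ℝ) : ‖wave m t‖ = 1 := by
  rw [wave, show 2 * π * I * m * t = ((2 * π * m * t : ℝ) : ℂ) * I by push_cast; ring,
    norm_exp_ofReal_mul_I]

lemma continuous_wave (m : ℤ) : Continuous (wave m) := by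
  unfold wave
  fun_prop

lemma sum_range_wave_div (L : ℕ) (m : ℤ) :
    ∑ j ∈ range L, wave m (j / L) = if (L : ℤ) ∣ m then (L : ℂ) else 0 := by
  rcases eq_or_ne L 0 with rfl | hL
  · simp
  set ζ := exp (2 * π * I / L)
  have hζ : IsPrimitiveRoot ζ L := isPrimitiveRoot_exp L hL
  have hpow : ∀ j : ℕ, wave m (j / L) = (ζ ^ m) ^ j := fun j => by
    rw [← zpow_natCast, ← zpow_mul, ← exp_int_mul, wave]
    push_cast
    ring_nf
  simp_rw [hpow]
  split_ifs with hdvd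
  · simp [(hζ.zpow_eq_one_iff_dvd m).mpr hdvd]
  · rw [geom_sum_eq ((hζ.zpow_eq_one_iff_dvd m).not.mpr hdvd), ← zpow_natCast, ← zpow_mul,
      (hζ.zpow_eq_one_iff_dvd _).mpr (dvd_mul_left _ _), sub_self, zero_div]

lemma sum_range_wave_div_of_abs_lt {L : ℕ} {m : ℤ} (hm : |m| < L) :
    ∑ j ∈ range L, wave m (j / L) = if m = 0 then (L : ℂ) else 0 := by
  rw [sum_range_wave_div]
  congr 1
  exact propext ⟨fun h => Int.eq_zero_of_abs_lt_dvd h hm, fun h => h ▸ dvd_zero _⟩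

lemma tendsto_integral_of_integral_limsup_eq_zero {α : Type*} [MeasurableSpace α]
    {μ : Measure α} [IsFiniteMeasure μ] {F : ℕ → α → ℝ} {M : ℝ}
    (hF : ∀ N, Measurable (F N)) (hF0 : ∀ N x, 0 ≤ F N x) (hFM : ∀ N x, F N x ≤ M)
    (h : ∫ x, limsup (fun N => F N x) atTop ∂μ = 0) :
    Tendsto (fun N => ∫ x, F N x ∂μ) atTop (𝓝 0) := by
  have hbdd : ∀ x, IsBoundedUnder (· ≤ ·) atTop (fun N => F N x) :=
    fun x => isBoundedUnder_of ⟨M, fun N => hFM N x⟩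
  have hbdd' : ∀ x, IsBoundedUnder (· ≥ ·) atTop (fun N => F N x) :=
    fun x => isBoundedUnder_of ⟨0, fun N => hF0 N x⟩
  have hliminf : ∀ x, 0 ≤ liminf (fun N => F N x) atTop := fun x =>
    le_liminf_of_le (hbdd x).isCoboundedUnder_ge (Eventually.of_forall (hF0 · x))
  have hlimsup : ∀ x, limsup (fun N => F N x) atTop ≤ M := fun x =>
    limsup_le_of_le (hbdd' x).isCoboundedUnder_le (Eventually.of_forall (hFM · x))
  have hlimsup0 : ∀ x, 0 ≤ limsup (fun N => F N x) atTop := fun x =>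
    (hliminf x).trans (liminf_le_limsup (hbdd x) (hbdd' x))
  have hint : Integrable (fun x => limsup (fun N => F N x) atTop) μ :=
    .of_bound (Measurable.limsup hF).aestronglyMeasurable M <| Eventually.of_forall fun x => by
      rw [Real.norm_of_nonneg (hlimsup0 x)]
      exact hlimsup x
  have hae : ∀ᵐ x ∂μ, Tendsto (fun N => F N x) atTop (𝓝 0) := by
    filter_upwards [(integral_eq_zero_iff_of_nonneg hlimsup0 hint).mp h] with x hx
    exact tendsto_of_le_liminf_of_limsup_le (hliminf x) hx.le (hbdd x) (hbdd' x)
  simpa using tendsto_integral_of_dominated_convergence (fun _ => M)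
    (fun N => (hF N).aestronglyMeasurable) (integrable_const M)
    (fun N => Eventually.of_forall fun x => by rw [Real.norm_of_nonneg (hF0 N x)]; exact hFM N x)
    hae

section Orbit

variable {Y : Type*} {U : Y → Y} {f : Y → ℝ} {M : ℝ}

noncomputable def orbitExpSum (f : Y → ℝ) (U : Y → Y) (N : ℕ) (y : Y) (t : ℝ) : ℂ :=
  ∑ n ∈ Icc 1 N, (f (U^[n] y) : ℂ) * wave n t

noncomputable def wienerWintnerSup (f : Y → ℝ) (U : Y → Y) (N : ℕ) (y : Y) : ℝ :=
  ⨆ t : ℝ, ‖(1 / (N : ℂ)) * orbitExpSum f U N y t‖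

lemma norm_orbitExpSum_le (hM : ∀ y, |f y| ≤ M) (N : ℕ) (y : Y) (t : ℝ) :
    ‖orbitExpSum f U N y t‖ ≤ N * M := by
  calc ‖orbitExpSum f U N y t‖ ≤ ∑ n ∈ Icc 1 N, ‖(f (U^[n] y) : ℂ) * wave n t‖ := norm_sum_le _ _
    _ ≤ ∑ n ∈ Icc 1 N, M := sum_le_sum fun n _ => by
      rw [norm_mul, norm_wave, mul_one, norm_real, Real.norm_eq_abs]
      exact hM _
    _ = N * M := by simp

lemma wienerWintnerSup_nonneg (N : ℕ) (y : Y) : 0 ≤ wienerWintnerSup f U N y :=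
  Real.iSup_nonneg fun _ => norm_nonneg _

lemma norm_one_div_mul_orbitExpSum_le (hM : ∀ y, |f y| ≤ M) (N : ℕ) (y : Y) (t : ℝ) :
    ‖(1 / (N : ℂ)) * orbitExpSum f U N y t‖ ≤ M := by
  rcases Nat.eq_zero_or_pos N with rfl | hN
  · simpa using (abs_nonneg _).trans (hM y)
  rw [norm_mul, norm_div, norm_one, norm_natCast, one_div_mul_eq_div, div_le_iff₀' (by positivity)]
  exact norm_orbitExpSum_le hM N y t

lemma wienerWintnerSup_le (hM : ∀ y, |f y| ≤ M) (N : ℕ) (y : Y) :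
    wienerWintnerSup f U N y ≤ M :=
  ciSup_le (norm_one_div_mul_orbitExpSum_le hM N y)

lemma norm_orbitExpSum_le_mul_wienerWintnerSup (hM : ∀ y, |f y| ≤ M) (N : ℕ) (y : Y) (t : ℝ) :
    ‖orbitExpSum f U N y t‖ ≤ N * wienerWintnerSup f U N y := by
  rcases Nat.eq_zero_or_pos N with rfl | hN
  · simp [orbitExpSum]
  have hle : ‖(1 / (N : ℂ)) * orbitExpSum f U N y t‖ ≤ wienerWintnerSup f U N y :=
    le_ciSup ⟨M, Set.forall_mem_range.mpr (norm_one_div_mul_orbitExpSum_le hM N y)⟩ t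
  rwa [norm_mul, norm_div, norm_one, norm_natCast, one_div_mul_eq_div,
    div_le_iff₀' (by positivity)] at hle

variable [MeasurableSpace Y] {ν : Measure Y}

lemma measurable_orbitExpSum (hU : Measurable U) (hfm : Measurable f) (N : ℕ) (t : ℝ) :
    Measurable fun y => orbitExpSum f U N y t :=
  Finset.measurable_sum _ fun n _ =>
    (measurable_ofReal.comp (hfm.comp (hU.iterate n))).mul_const _

lemma measurable_wienerWintnerSup (hU : Measurable U) (hfm : Measurable f) (N : ℕ) :
    Measurable (wienerWintnerSup f U N) := by
  have hcont : ∀ y, Continuous fun t => ‖(1 / (N : ℂ)) * orbitExpSum f U N y t‖ := fun y => by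
    unfold orbitExpSum
    have := continuous_wave
    fun_prop
  have hrat : ∀ y, wienerWintnerSup f U N y =
      ⨆ q : ℚ, ‖(1 / (N : ℂ)) * orbitExpSum f U N y q‖ := fun y => by
    rw [wienerWintnerSup, ← (Rat.denseRange_cast (𝕜 := ℝ)).ciSup' (hcont y)]
    exact iSup_range' (fun t : ℝ => ‖(1 / (N : ℂ)) * orbitExpSum f U N y t‖) Rat.cast
  simp_rw [funext hrat]
  exact Measurable.iSup fun q =>
    ((measurable_orbitExpSum hU hfm N q).const_mul _).norm

noncomputable def correlation (ν : Measure Y) (U : Y → Y) (f : Y → ℝ) (n : ℕ) : ℝ :=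
  ∫ y, f y * f (U^[n] y) ∂ν

lemma integral_comp_iterate_mul_comp_iterate_add (hU : MeasurePreserving U ν ν)
    (hfm : Measurable f) (k n : ℕ) :
    ∫ y, f (U^[k] y) * f (U^[n + k] y) ∂ν = correlation ν U f n := by
  have hg : Measurable fun z => f z * f (U^[n] z) := hfm.mul (hfm.comp (hU.measurable.iterate n))
  simp_rw [Function.iterate_add_apply]
  calc ∫ y, f (U^[k] y) * f (U^[n] (U^[k] y)) ∂ν
      = ∫ z, f z * f (U^[n] z) ∂(ν.map U^[k]) :=
        (integral_map (hU.iterate k).measurable.aemeasurable hg.aestronglyMeasurable).symm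
    _ = correlation ν U f n := by rw [(hU.iterate k).map_eq, correlation]

variable [IsFiniteMeasure ν]

lemma integrable_comp_iterate_mul_comp_iterate (hU : Measurable U) (hfm : Measurable f)
    (hM : ∀ y, |f y| ≤ M) (k k' : ℕ) :
    Integrable (fun y => f (U^[k] y) * f (U^[k'] y)) ν :=
  .of_bound ((hfm.comp (hU.iterate k)).mul (hfm.comp (hU.iterate k'))).aestronglyMeasurable (M * M)
    (Eventually.of_forall fun y => by
      rw [norm_mul, Real.norm_eq_abs, Real.norm_eq_abs]
      exact mul_le_mul (hM _) (hM _) (abs_nonneg _) ((abs_nonneg _).trans (hM y)))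

lemma integrable_wienerWintnerSup (hU : Measurable U) (hfm : Measurable f)
    (hM : ∀ y, |f y| ≤ M) (N : ℕ) :
    Integrable (wienerWintnerSup f U N) ν :=
  .of_bound (measurable_wienerWintnerSup hU hfm N).aestronglyMeasurable M
    (Eventually.of_forall fun y => by
      rw [Real.norm_of_nonneg (wienerWintnerSup_nonneg N y)]
      exact wienerWintnerSup_le hM N y)

noncomputable def fejerWeight (ν : Measure Y) (f : Y → ℝ) (U : Y → Y) (K : ℕ) (t : ℝ) : ℝ :=
  ∫ y, normSq (orbitExpSum f U K y t) ∂ν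

lemma ofReal_fejerWeight (hU : Measurable U) (hfm : Measurable f) (hM : ∀ y, |f y| ≤ M)
    (K : ℕ) (t : ℝ) :
    (fejerWeight ν f U K t : ℂ) = ∑ k ∈ Icc 1 K, ∑ k' ∈ Icc 1 K,
      (∫ y, f (U^[k] y) * f (U^[k'] y) ∂ν : ℝ) * wave (k' - k) t := by
  have hpt : ∀ y, (normSq (orbitExpSum f U K y t) : ℂ) = ∑ k ∈ Icc 1 K, ∑ k' ∈ Icc 1 K,
      ((f (U^[k] y) * f (U^[k'] y) : ℝ) : ℂ) * wave (k' - k) t := fun y => by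
    rw [normSq_eq_conj_mul_self, orbitExpSum, map_sum, sum_mul_sum]
    refine sum_congr rfl fun k _ => sum_congr rfl fun k' _ => ?_
    rw [sub_eq_neg_add, wave_add, ← conj_wave, map_mul, conj_ofReal]
    push_cast
    ring
  have hint : ∀ k k' : ℕ, Integrable
      (fun y => ((f (U^[k] y) * f (U^[k'] y) : ℝ) : ℂ) * wave (k' - k) t) ν := fun k k' =>
    (integrable_comp_iterate_mul_comp_iterate hU hfm hM k k').ofReal.mul_const _
  rw [fejerWeight, ← integral_complex_ofReal, integral_congr_ae (Eventually.of_forall hpt),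
    integral_finsetSum _ fun k _ => integrable_finsetSum _ fun k' _ => hint k k']
  refine sum_congr rfl fun k _ => ?_
  rw [integral_finsetSum _ fun k' _ => hint k k']
  refine sum_congr rfl fun k' _ => ?_
  rw [integral_mul_const, integral_complex_ofReal]

lemma sum_conj_wave_mul_fejerWeight (hU : MeasurePreserving U ν ν) (hfm : Measurable f)
    (hM : ∀ y, |f y| ≤ M) {K L n : ℕ} (hKL : K + n ≤ L) :
    ∑ j ∈ range L, conj (wave n (j / L)) * fejerWeight ν f U K (j / L) =
      L * ((K - n : ℕ) * correlation ν U f n) := by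
  have horth : ∀ k ∈ Icc 1 K, ∀ k' ∈ Icc 1 K,
      ∑ j ∈ range L, wave (-n + (k' - k)) (j / L) = if k' = n + k then (L : ℂ) else 0 := by
    intro k hk k' hk'
    rw [mem_Icc] at hk hk'
    rw [sum_range_wave_div_of_abs_lt (by rw [abs_lt]; omega)]
    congr 1
    exact propext (by omega)
  calc ∑ j ∈ range L, conj (wave n (j / L)) * fejerWeight ν f U K (j / L)
      = ∑ k ∈ Icc 1 K, ∑ k' ∈ Icc 1 K, (∫ y, f (U^[k] y) * f (U^[k'] y) ∂ν : ℝ) *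
          ∑ j ∈ range L, wave (-n + (k' - k)) (j / L) := by
        simp_rw [ofReal_fejerWeight hU.measurable hfm hM, conj_wave, mul_sum, wave_add]
        rw [sum_comm]
        refine sum_congr rfl fun k _ => ?_
        rw [sum_comm]
        exact sum_congr rfl fun k' _ => sum_congr rfl fun j _ => by ring
    _ = ∑ k ∈ Icc 1 K, ∑ k' ∈ Icc 1 K,
          if k' = n + k then (correlation ν U f n : ℂ) * L else 0 := by
        refine sum_congr rfl fun k hk => sum_congr rfl fun k' hk' => ?_
        rw [horth k hk k' hk', mul_ite, mul_zero]
        split_ifs with h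
        · rw [h, integral_comp_iterate_mul_comp_iterate_add hU hfm]
        · rfl
    _ = L * ((K - n : ℕ) * correlation ν U f n) := by
        simp_rw [sum_ite_eq', ← sum_filter]
        rw [show (Icc 1 K).filter (fun k => n + k ∈ Icc 1 K) = Icc 1 (K - n) by
          ext k; simp only [mem_filter, mem_Icc]; omega]
        simp only [sum_const, Nat.card_Icc, add_tsub_cancel_right, nsmul_eq_mul]
        ring

lemma sum_correlation_mul_wave_eq_integral (hU : Measurable U) (hfm : Measurable f)
    (hM : ∀ y, |f y| ≤ M) (N : ℕ) (t : ℝ) :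
    ∑ n ∈ Icc 1 N, (correlation ν U f n : ℂ) * wave n t =
      ∫ y, (f y : ℂ) * orbitExpSum f U N y t ∂ν := by
  have hint : ∀ n : ℕ, Integrable (fun y => ((f y * f (U^[n] y) : ℝ) : ℂ) * wave n t) ν :=
    fun n => (integrable_comp_iterate_mul_comp_iterate hU hfm hM 0 n).ofReal.mul_const _
  simp_rw [orbitExpSum, mul_sum]
  rw [integral_finsetSum _ fun n _ => ?_]
  · refine sum_congr rfl fun n _ => ?_
    rw [correlation, ← integral_complex_ofReal, ← integral_mul_const]
    push_cast
    simp_rw [mul_assoc]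
  · simpa [mul_assoc] using hint n

lemma norm_sum_correlation_mul_wave_le (hU : Measurable U) (hfm : Measurable f)
    (hM : ∀ y, |f y| ≤ M) (N : ℕ) (t : ℝ) :
    ‖∑ n ∈ Icc 1 N, (correlation ν U f n : ℂ) * wave n t‖ ≤
      N * M * ∫ y, wienerWintnerSup f U N y ∂ν := by
  rw [sum_correlation_mul_wave_eq_integral hU hfm hM, ← integral_const_mul]
  refine (norm_integral_le_integral_norm _).trans <| integral_mono_of_nonneg
    (Eventually.of_forall fun _ => norm_nonneg _)
    ((integrable_wienerWintnerSup hU hfm hM N).const_mul _)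
    (Eventually.of_forall fun y => ?_)
  calc ‖(f y : ℂ) * orbitExpSum f U N y t‖ ≤ M * (N * wienerWintnerSup f U N y) := by
        rw [norm_mul, norm_real, Real.norm_eq_abs]
        exact mul_le_mul (hM y) (norm_orbitExpSum_le_mul_wienerWintnerSup hM N y t)
          (norm_nonneg _) ((abs_nonneg _).trans (hM y))
    _ = N * M * wienerWintnerSup f U N y := by ring

lemma sum_sq_correlation_le (hU : MeasurePreserving U ν ν) (hfm : Measurable f)
    (hM : ∀ y, |f y| ≤ M) (N : ℕ) :
    ∑ n ∈ Icc 1 N, correlation ν U f n ^ 2 ≤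
      2 * N * M * correlation ν U f 0 * ∫ y, wienerWintnerSup f U N y ∂ν := by
  rcases Nat.eq_zero_or_pos N with rfl | hN
  · simp
  set c := correlation ν U f
  set K := 2 * N
  set L := 3 * N
  set F : ℕ → ℝ := fun j => fejerWeight ν f U K (j / L)
  set A : ℕ → ℂ := fun j => ∑ n ∈ Icc 1 N, (c n : ℂ) * wave n (j / L)
  set B := N * M * ∫ y, wienerWintnerSup f U N y ∂ν
  have hF : ∀ j, 0 ≤ F j := fun j => integral_nonneg fun y => normSq_nonneg _
  have hA : ∀ j, ‖A j‖ ≤ B := fun j => norm_sum_correlation_mul_wave_le hU.measurable hfm hM N _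
  have hmass : ∑ j ∈ range L, F j = L * (K * c 0) := by
    have := sum_conj_wave_mul_fejerWeight hU hfm hM (K := K) (L := L) (n := 0) (by omega)
    simp only [Nat.cast_zero, wave_zero, map_one, one_mul, Nat.sub_zero] at this
    exact_mod_cast this
  have hpair : ∑ j ∈ range L, conj (A j) * F j =
      ((L * ∑ n ∈ Icc 1 N, (K - n : ℕ) * c n ^ 2 : ℝ) : ℂ) := by
    simp_rw [A, map_sum, map_mul, conj_ofReal, sum_mul]
    rw [sum_comm]
    push_cast
    rw [mul_sum]
    refine sum_congr rfl fun n hn => ?_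
    have hKL : K + n ≤ L := by have := (mem_Icc.mp hn).2; omega
    simp_rw [F, mul_assoc, ← mul_sum, sum_conj_wave_mul_fejerWeight hU hfm hM hKL]
    ring
  have hlow : (L : ℝ) * (N * ∑ n ∈ Icc 1 N, c n ^ 2) ≤
      L * ∑ n ∈ Icc 1 N, (K - n : ℕ) * c n ^ 2 := by
    rw [mul_sum]
    gcongr with n hn
    have := (mem_Icc.mp hn).2
    omega
  have hup : ‖∑ j ∈ range L, conj (A j) * F j‖ ≤ B * (L * (K * c 0)) := by
    calc ‖∑ j ∈ range L, conj (A j) * F j‖ ≤ ∑ j ∈ range L, B * F j := by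
          refine (norm_sum_le _ _).trans (sum_le_sum fun j _ => ?_)
          rw [norm_mul, RCLike.norm_conj, norm_real, Real.norm_of_nonneg (hF j)]
          exact mul_le_mul_of_nonneg_right (hA j) (hF j)
      _ = B * (L * (K * c 0)) := by rw [← mul_sum, hmass]
  rw [hpair, norm_real, Real.norm_of_nonneg (by positivity)] at hup
  refine le_of_mul_le_mul_left ?_ (by positivity : (0 : ℝ) < L * N)
  calc (L * N : ℝ) * ∑ n ∈ Icc 1 N, c n ^ 2 = L * (N * ∑ n ∈ Icc 1 N, c n ^ 2) := by ring
    _ ≤ B * (L * (K * c 0)) := hlow.trans hup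
    _ = L * N * (2 * N * M * c 0 * ∫ y, wienerWintnerSup f U N y ∂ν) := by
        simp only [B, K]
        push_cast
        ring

end Orbit

/-- if the Wiener–Wintner suprema of `f` have vanishing integral, then the
spectral measure of `f` with respect to `U` is continuous, i.e.
`(1/N) ∑_{n=1}^N |∫ f·(f∘Uⁿ) dν|² → 0`. -/
theorem spectral_measure_continuous_of_uniform_ww
    {Y : Type*} [MeasurableSpace Y] (ν : Measure Y) [IsProbabilityMeasure ν]
    (U : Y → Y) (hU : MeasurePreserving U ν ν)
    (f : Y → ℝ) (hfm : Measurable f) (hfb : ∃ M : ℝ, ∀ y, |f y| ≤ M)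
    (h : ∫ y, limsup (fun N : ℕ =>
        ⨆ t : ℝ, ‖(1 / (N : ℂ)) * ∑ n ∈ Finset.Icc 1 N,
          (f (U^[n] y) : ℂ) *
            Complex.exp (2 * (Real.pi : ℂ) * Complex.I * (n : ℂ) * (t : ℂ))‖) atTop ∂ν = 0) :
    Tendsto (fun N : ℕ => (1 / (N : ℝ)) * ∑ n ∈ Finset.Icc 1 N,
      |∫ y, f y * f (U^[n] y) ∂ν| ^ 2) atTop (nhds 0) := by
  obtain ⟨M, hM⟩ := hfb
  have hww : Tendsto (fun N => ∫ y, wienerWintnerSup f U N y ∂ν) atTop (𝓝 0) :=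
    tendsto_integral_of_integral_limsup_eq_zero (measurable_wienerWintnerSup hU.measurable hfm)
      wienerWintnerSup_nonneg (wienerWintnerSup_le hM)
      (by simpa [wienerWintnerSup, orbitExpSum, wave] using h)
  have hbound := hww.const_mul (2 * M * correlation ν U f 0)
  rw [mul_zero] at hbound
  refine squeeze_zero' (Eventually.of_forall fun N => by positivity)
    ((eventually_gt_atTop 0).mono fun N hN => ?_) hbound
  simp_rw [sq_abs, one_div_mul_eq_div, div_le_iff₀' (by positivity : (0 : ℝ) < N)]
  exact (sum_sq_correlation_le hU hfm hM N).trans_eq (by ring)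
end

section
/- Let (X, 𝓕, μ) be a probability space and T : X → X a measure-preserving transformation that is ergodic, and let s be a positive integer. Then there exist a positive integer l and measurable sets A₁, …, A_l ⊆ X which are pairwise disjoint, whose union is X up to a μ-null set, each satisfying T^{-s}A_i = A_i up to a μ-null set and μ(A_i) = 1/l, such that every f ∈ L^∞(μ) with f∘T^{s} = f μ-a.e. satisfies f(x) = l ∑_{i=1}^{l} 1_{A_i}(x) ∫_{A_i} f dμ for μ-a.e. x ∈ X; equivalently, f(x) = ∫ f(y) K(x,y) dμ(y) μ-a.e., where K(x,y) = l ∑_{i=1}^{l} 1_{A_i}(x) 1_{A_i}(y). -/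
/-!
By ergodicity of `T`, the sets `T⁻ᵏ E`, `k < s`, cover `X` up to a null set whenever `E` is
non-null and a.e. `T^s`-invariant, so such sets have measure at least `1/s`. A non-null invariant
set `C` of measure less than twice the infimum of these measures cannot be split into two
non-null invariant sets, i.e. `T^s` is ergodic on `C`. The same holds for the sets `T⁻ᵏ C`; two
of them either coincide or are disjoint up to null sets, so those with `k` below the least
period `l` of `C` are almost disjoint, and by ergodicity of `T` they cover `X`. Disjointifying
them gives the sets `Aᵢ`, of measure `1/l`; a `T^s`-invariant `f` is a.e. constant on each,
which is the kernel formula.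
-/

open MeasureTheory Filter Set Function
open scoped ENNReal

section

variable {X : Type*} [MeasurableSpace X] {μ : Measure X}

theorem MeasureTheory.MeasurePreserving.ae_eq_of_preimage_ae_eq {f : X → X}
    (hf : MeasurePreserving f μ μ) {s t : Set X} (hs : NullMeasurableSet s μ)
    (ht : NullMeasurableSet t μ) (h : f ⁻¹' s =ᵐ[μ] f ⁻¹' t) : s =ᵐ[μ] t := by
  rw [← measure_symmDiff_eq_zero_iff, ← preimage_symmDiff,
    hf.measure_preimage (hs.symmDiff ht)] at h
  exact measure_symmDiff_eq_zero_iff.1 h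

theorem disjointed_ae_eq {ι : Type*} [Preorder ι] [LocallyFiniteOrderBot ι] [Countable ι]
    {f : ι → Set X} {i : ι} (h : ∀ j < i, μ (f j ∩ f i) = 0) :
    disjointed f i =ᵐ[μ] f i := by
  refine (disjointed_subset f i).eventuallyLE.antisymm (ae_le_set.2 ?_)
  refine measure_mono_null (fun x ⟨hxi, hxd⟩ => ?_) (measure_iUnion_null fun j =>
    measure_iUnion_null fun hj => h j hj)
  simp only [disjointed_eq_inter_compl, Set.mem_inter_iff, mem_iInter, mem_compl_iff, not_and,
    not_forall, not_not] at hxd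
  obtain ⟨j, hj, hxj⟩ := hxd hxi
  exact mem_iUnion₂.2 ⟨j, hj, hxj, hxi⟩

theorem measurableSet_disjointed {ι : Type*} [Preorder ι] [LocallyFiniteOrderBot ι]
    {f : ι → Set X} (hf : ∀ i, MeasurableSet (f i)) (i : ι) :
    MeasurableSet (disjointed f i) :=
  disjointedRec (fun _ j ht => ht.diff (hf j)) (hf i)

section Atoms

variable {g : X → X}

/- `QuasiErgodic g (μ.restrict D)` for an a.e. `g`-invariant `D` says that `D` is an atom of the
σ-algebra of a.e. `g`-invariant sets. -/
theorem quasiErgodic_restrict_of_measure_lt_two_mul (hg : MeasurePreserving g μ μ)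
    {m : ℝ≥0∞} (hm : ∀ E, MeasurableSet E → g ⁻¹' E =ᵐ[μ] E → μ E ≠ 0 → m ≤ μ E)
    {D : Set X} (hD : MeasurableSet D) (hDinv : g ⁻¹' D =ᵐ[μ] D) (hlt : μ D < 2 * m) :
    QuasiErgodic g (μ.restrict D) where
  toQuasiMeasurePreserving := by
    simpa only [Measure.restrict_congr_set hDinv] using
      (hg.restrict_preimage hD).quasiMeasurePreserving
  aeconst_set E hE hEinv := by
    rw [eventuallyConst_set', ae_eq_empty, ae_eq_univ, Measure.restrict_apply hE,
      Measure.restrict_apply hE.compl]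
    by_contra! h
    have hpiece : ∀ F, MeasurableSet F → g ⁻¹' F = F → μ (F ∩ D) ≠ 0 → m ≤ μ (F ∩ D) :=
      fun F hF hFinv hF0 => hm _ (hF.inter hD) (by
        rw [preimage_inter, hFinv]; exact EventuallyEq.rfl.inter hDinv) hF0
    have h2m : 2 * m ≤ μ D := by
      rw [two_mul, ← measure_inter_add_sdiff₀ D hE.nullMeasurableSet, inter_comm, sdiff_eq,
        inter_comm D]
      exact add_le_add (hpiece E hE hEinv h.1)
        (hpiece Eᶜ hE.compl (by rw [preimage_compl, hEinv]) h.2)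
    exact (h2m.trans_lt hlt).false

theorem exists_forall_quasiErgodic_restrict [IsFiniteMeasure μ] [NeZero μ]
    (hg : MeasurePreserving g μ μ) {δ : ℝ≥0∞} (hδ : δ ≠ 0)
    (hδle : ∀ E, MeasurableSet E → g ⁻¹' E =ᵐ[μ] E → μ E ≠ 0 → δ ≤ μ E) :
    ∃ C, MeasurableSet C ∧ g ⁻¹' C =ᵐ[μ] C ∧ μ C ≠ 0 ∧
      ∀ D, MeasurableSet D → g ⁻¹' D =ᵐ[μ] D → μ D ≤ μ C → QuasiErgodic g (μ.restrict D) := by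
  set m := sInf {t | ∃ E, MeasurableSet E ∧ g ⁻¹' E =ᵐ[μ] E ∧ μ E ≠ 0 ∧ μ E = t}
  have hm : ∀ E, MeasurableSet E → g ⁻¹' E =ᵐ[μ] E → μ E ≠ 0 → m ≤ μ E :=
    fun E hE hEinv hE0 => sInf_le ⟨E, hE, hEinv, hE0, rfl⟩
  have hδm : δ ≤ m := by
    refine le_sInf ?_
    rintro _ ⟨E, hE, hEinv, hE0, rfl⟩
    exact hδle E hE hEinv hE0
  have hm0 : m ≠ 0 := (hδ.bot_lt.trans_le hδm).ne'
  have hmtop : m ≠ ∞ := ne_top_of_le_ne_top (measure_ne_top μ univ)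
    (hm univ MeasurableSet.univ (by simp) (NeZero.ne _))
  have hm2 : m < 2 * m := by
    rw [two_mul]; exact ENNReal.lt_add_right hmtop hm0
  obtain ⟨_, ⟨C, hC, hCinv, hC0, rfl⟩, hCm⟩ := sInf_lt_iff.1 hm2
  exact ⟨C, hC, hCinv, hC0, fun D hD hDinv hDC =>
    quasiErgodic_restrict_of_measure_lt_two_mul hg hm hD hDinv (hDC.trans_lt hCm)⟩

theorem QuasiErgodic.measure_inter_eq_zero_or_ae_eq {A B : Set X}
    (hA : QuasiErgodic g (μ.restrict A)) (hB : QuasiErgodic g (μ.restrict B))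
    (hAm : MeasurableSet A) (hBm : MeasurableSet B)
    (hAinv : g ⁻¹' A =ᵐ[μ] A) (hBinv : g ⁻¹' B =ᵐ[μ] B) :
    μ (A ∩ B) = 0 ∨ A =ᵐ[μ] B := by
  have hA' := hA.ae_empty_or_univ₀ hBm.nullMeasurableSet (ae_restrict_of_ae hBinv)
  have hB' := hB.ae_empty_or_univ₀ hAm.nullMeasurableSet (ae_restrict_of_ae hAinv)
  simp only [ae_eq_empty, ae_eq_univ, Measure.restrict_apply hAm, Measure.restrict_apply hBm,
    Measure.restrict_apply hAm.compl, Measure.restrict_apply hBm.compl] at hA' hB'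
  rcases hA' with h | hAB
  · exact Or.inl (by rwa [inter_comm])
  rcases hB' with h | hBA
  · exact Or.inl h
  refine Or.inr (EventuallyLE.antisymm (ae_le_set.2 ?_) (ae_le_set.2 ?_))
  · rwa [sdiff_eq, inter_comm]
  · rwa [sdiff_eq, inter_comm]

end Atoms

section Orbit

variable {T : X → X} {A : Set X} {n : ℕ}

theorem preimage_biUnion_preimage_iterate_ae_eq (hA : T^[n] ⁻¹' A =ᵐ[μ] A) :
    T ⁻¹' (⋃ k < n, T^[k] ⁻¹' A) =ᵐ[μ] ⋃ k < n, T^[k] ⁻¹' A := by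
  cases n with
  | zero => simp
  | succ n =>
    have hshift : T ⁻¹' (⋃ k < n + 1, T^[k] ⁻¹' A) = ⋃ k < n + 1, T^[k + 1] ⁻¹' A := by
      simp only [preimage_iUnion, ← preimage_comp, ← Function.iterate_succ]
    rw [hshift, biUnion_lt_succ, biUnion_lt_succ', union_comm]
    exact hA.union EventuallyEq.rfl

theorem Ergodic.measure_compl_biUnion_preimage_iterate_eq_zero (hT : Ergodic T μ)
    (hAm : MeasurableSet A) (hA : T^[n] ⁻¹' A =ᵐ[μ] A) (hA0 : μ A ≠ 0) (hn : 0 < n) :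
    μ (⋃ k < n, T^[k] ⁻¹' A)ᶜ = 0 := by
  have hUm : MeasurableSet (⋃ k < n, T^[k] ⁻¹' A) :=
    .iUnion fun k => .iUnion fun _ => hAm.preimage (hT.measurable.iterate k)
  refine ae_eq_univ.1 <| (hT.quasiErgodic.ae_empty_or_univ₀ hUm.nullMeasurableSet
    (preimage_biUnion_preimage_iterate_ae_eq hA)).resolve_left fun h => hA0 ?_
  exact measure_mono_null (fun x hx => mem_iUnion₂.2 ⟨0, hn, hx⟩) (ae_eq_empty.1 h)

theorem Ergodic.one_le_mul_measure_of_preimage_iterate_ae_eq [IsProbabilityMeasure μ]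
    (hT : Ergodic T μ) (hAm : MeasurableSet A) (hA : T^[n] ⁻¹' A =ᵐ[μ] A) (hA0 : μ A ≠ 0)
    (hn : 0 < n) : 1 ≤ n * μ A := by
  calc 1 ≤ μ (⋃ k < n, T^[k] ⁻¹' A) + μ (⋃ k < n, T^[k] ⁻¹' A)ᶜ :=
        measure_univ.symm.trans_le (measure_univ_le_add_compl _)
    _ = μ (⋃ k < n, T^[k] ⁻¹' A) := by
        rw [hT.measure_compl_biUnion_preimage_iterate_eq_zero hAm hA hA0 hn, add_zero]
    _ ≤ ∑ k ∈ Finset.range n, μ (T^[k] ⁻¹' A) := by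
        simpa only [← Finset.mem_range] using measure_biUnion_finset_le (Finset.range n) _
    _ = n * μ A := by
        simp [(hT.iterate _).measure_preimage hAm.nullMeasurableSet]

end Orbit

section Partition

variable {T : X → X} {s : ℕ} {C : Set X}

theorem preimage_iterate_preimage_iterate_ae_eq (hT : Measure.QuasiMeasurePreserving T μ μ)
    (hC : T^[s] ⁻¹' C =ᵐ[μ] C) (k : ℕ) : T^[s] ⁻¹' (T^[k] ⁻¹' C) =ᵐ[μ] T^[k] ⁻¹' C := by
  rw [← preimage_comp, ← Function.iterate_add, add_comm, Function.iterate_add, preimage_comp]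
  exact (hT.iterate k).preimage_ae_eq hC

theorem measure_preimage_iterate_inter_eq_zero_of_lt_period (hT : MeasurePreserving T μ μ)
    (hC : MeasurableSet C) (hCinv : T^[s] ⁻¹' C =ᵐ[μ] C)
    (hatom : ∀ k, QuasiErgodic T^[s] (μ.restrict (T^[k] ⁻¹' C))) {l : ℕ}
    (hper : ∀ k, 0 < k → k < l → ¬ T^[k] ⁻¹' C =ᵐ[μ] C) {i j : ℕ} (hij : i < j) (hjl : j < l) :
    μ (T^[i] ⁻¹' C ∩ T^[j] ⁻¹' C) = 0 := by
  have hBm : ∀ k, MeasurableSet (T^[k] ⁻¹' C) := fun k => hC.preimage (hT.measurable.iterate k)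
  have hBinv := preimage_iterate_preimage_iterate_ae_eq hT.quasiMeasurePreserving hCinv
  refine ((hatom i).measure_inter_eq_zero_or_ae_eq (hatom j) (hBm i) (hBm j) (hBinv i)
    (hBinv j)).resolve_right fun hBij => hper (j - i) (by omega) (by omega) ?_
  refine (hT.iterate i).ae_eq_of_preimage_ae_eq (hBm _).nullMeasurableSet
    hC.nullMeasurableSet ?_
  rw [← preimage_comp, ← Function.iterate_add, Nat.sub_add_cancel hij.le]
  exact hBij.symm

theorem Ergodic.exists_partition_quasiErgodic_iterate [IsProbabilityMeasure μ]
    (hT : Ergodic T μ) (hs : 0 < s) :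
    ∃ (l : ℕ) (A : Fin l → Set X), 0 < l ∧ (∀ i, MeasurableSet (A i)) ∧
      Pairwise (Disjoint on A) ∧ μ (⋃ i, A i)ᶜ = 0 ∧ (∀ i, T^[s] ⁻¹' A i =ᵐ[μ] A i) ∧
      (∀ i, μ (A i) = 1 / l) ∧ ∀ i, QuasiErgodic T^[s] (μ.restrict (A i)) := by
  classical
  obtain ⟨C, hC, hCinv, hC0, hatom⟩ := exists_forall_quasiErgodic_restrict (hT.iterate s)
    (δ := 1 / s) (by simp) fun E hE hEinv hE0 => ENNReal.div_le_of_le_mul <| by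
      rw [mul_comm]; exact hT.one_le_mul_measure_of_preimage_iterate_ae_eq hE hEinv hE0 hs
  set B : ℕ → Set X := fun k => T^[k] ⁻¹' C
  have hBm : ∀ k, MeasurableSet (B k) := fun k => hC.preimage (hT.measurable.iterate k)
  have hBμ : ∀ k, μ (B k) = μ C := fun k =>
    (hT.iterate k).measure_preimage hC.nullMeasurableSet
  have hBinv := preimage_iterate_preimage_iterate_ae_eq hT.quasiMeasurePreserving hCinv
  have hBatom : ∀ k, QuasiErgodic T^[s] (μ.restrict (B k)) := fun k =>
    hatom _ (hBm k) (hBinv k) (hBμ k).le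
  have hperiodic : ∃ n, 0 < n ∧ T^[n] ⁻¹' C =ᵐ[μ] C := ⟨s, hs, hCinv⟩
  set l := Nat.find hperiodic
  obtain ⟨hl, hlC⟩ := Nat.find_spec hperiodic
  set A : Fin l → Set X := disjointed fun i => B i
  have hAB : ∀ i, A i =ᵐ[μ] B i := fun i => disjointed_ae_eq fun j hj =>
    measure_preimage_iterate_inter_eq_zero_of_lt_period hT.toMeasurePreserving hC hCinv hBatom
      (fun k hk hkl h => Nat.find_min hperiodic hkl ⟨hk, h⟩) hj i.isLt
  have hAm : ∀ i, MeasurableSet (A i) := measurableSet_disjointed fun i => hBm i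
  have hUc : μ (⋃ i, A i)ᶜ = 0 := by
    have hU : ⋃ i, A i = ⋃ k < l, B k := by
      rw [iUnion_disjointed]; ext x; simp [Fin.exists_iff]
    rw [hU]; exact hT.measure_compl_biUnion_preimage_iterate_eq_zero hC hlC hC0 hl
  have hμA : ∀ i, μ (A i) = μ C := fun i => (measure_congr (hAB i)).trans (hBμ i)
  have hlμC : l * μ C = 1 := by
    calc l * μ C = ∑ i, μ (A i) := by simp [hμA]
      _ = μ (⋃ i, A i) := by rw [measure_iUnion (disjoint_disjointed _) hAm, tsum_fintype]
      _ = 1 := (prob_compl_eq_zero_iff (.iUnion hAm)).1 hUc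
  refine ⟨l, A, hl, hAm, disjoint_disjointed _, hUc, fun i => ?_, fun i => ?_, fun i => ?_⟩
  · exact ((hT.iterate s).quasiMeasurePreserving.preimage_ae_eq (hAB i)).trans
      ((hBinv i).trans (hAB i).symm)
  · rw [hμA, ENNReal.eq_div_iff (Nat.cast_ne_zero.2 hl.ne') (by simp), hlμC]
  · rw [Measure.restrict_congr_set (hAB i)]; exact hBatom i

end Partition

theorem ae_eq_mul_sum_indicator_mul_setIntegral {l : ℕ} {A : Fin l → Set X} {f : X → ℝ}
    (hAm : ∀ i, MeasurableSet (A i)) (hdisj : Pairwise (Disjoint on A))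
    (hcover : μ (⋃ i, A i)ᶜ = 0) (hμA : ∀ i, μ (A i) = 1 / l)
    (hconst : ∀ i, ∃ c, f =ᵐ[μ.restrict (A i)] fun _ => c) :
    ∀ᵐ x ∂μ, f x =
      (l : ℝ) * ∑ i : Fin l, (A i).indicator (fun _ => (1 : ℝ)) x * ∫ y in A i, f y ∂μ := by
  choose c hc using hconst
  have hint : ∀ i, ∫ y in A i, f y ∂μ = c i / l := fun i => by
    rw [integral_congr_ae (hc i), setIntegral_const, measureReal_def, hμA, smul_eq_mul,
      ENNReal.toReal_div]
    simp [div_eq_inv_mul]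
  filter_upwards [measure_eq_zero_iff_ae_notMem.1 hcover,
    ae_all_iff.2 fun i => (ae_restrict_iff' (hAm i)).1 (hc i)] with x hx hfx
  obtain ⟨i, hxi⟩ := mem_iUnion.1 (not_not.1 hx)
  have hl : (l : ℝ) ≠ 0 := Nat.cast_ne_zero.2 (Fin.pos i).ne'
  rw [Finset.sum_eq_single i (fun j _ hji => by
      rw [indicator_of_notMem ((hdisj hji.symm).notMem_of_mem_left hxi), zero_mul])
    (by simp), indicator_of_mem hxi, hint, hfx i hxi]
  field_simp

end

/-- the Furstenberg–Weiss integral kernel for `T^s`-invariant functions.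
For an ergodic `T` and `s ≥ 1` there are `l ≥ 1` pairwise disjoint measurable sets
`A₁, …, A_l` covering `X` up to a null set, each `T^s`-invariant up to a null set and of
measure `1/l`, such that every bounded measurable `f` with `f ∘ T^s = f` a.e. satisfies
`f(x) = l ∑ᵢ 1_{Aᵢ}(x) ∫_{Aᵢ} f dμ` for a.e. `x` (i.e. `f(x) = ∫ f(y) K(x,y) dμ(y)` with
`K(x,y) = l ∑ᵢ 1_{Aᵢ}(x) 1_{Aᵢ}(y)`). -/
theorem exists_integral_kernel_for_power_invariant_functions
    {X : Type*} [MeasurableSpace X] (μ : Measure X) [IsProbabilityMeasure μ]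
    (T : X → X) (hT : Ergodic T μ) (s : ℕ) (hs : 0 < s) :
    ∃ (l : ℕ) (A : Fin l → Set X), 0 < l ∧
      (∀ i, MeasurableSet (A i)) ∧
      (∀ i j, i ≠ j → Disjoint (A i) (A j)) ∧
      μ (⋃ i, A i)ᶜ = 0 ∧
      (∀ i, μ (symmDiff (T^[s] ⁻¹' A i) (A i)) = 0) ∧
      (∀ i, μ (A i) = 1 / l) ∧
      (∀ f : X → ℝ, Measurable f → (∃ M : ℝ, ∀ x, |f x| ≤ M) →
        (∀ᵐ x ∂μ, f (T^[s] x) = f x) →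
        ∀ᵐ x ∂μ, f x =
          (l : ℝ) * ∑ i : Fin l, (A i).indicator (fun _ => (1 : ℝ)) x * ∫ y in A i, f y ∂μ) := by
  obtain ⟨l, A, hl, hAm, hdisj, hcover, hinv, hμA, hatom⟩ :=
    hT.exists_partition_quasiErgodic_iterate hs
  refine ⟨l, A, hl, hAm, fun i j => @hdisj i j, hcover,
    fun i => measure_symmDiff_eq_zero_iff.2 (hinv i), hμA, fun f hf _ hfinv => ?_⟩
  exact ae_eq_mul_sum_indicator_mul_setIntegral hAm hdisj hcover hμA fun i =>
    (hatom i).ae_eq_const_of_ae_eq_comp₀ hf.nullMeasurable (ae_restrict_of_ae hfinv)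
end

section
/- Let (X, 𝓕, μ) be a probability space and T : X → X an invertible measure-preserving transformation that is ergodic, and let f ∈ L^∞(μ) be real-valued. Then for every nonzero integer a and every positive integer k, limsup_{H→∞} (1/H) ∑_{h=1}^{H} ⦀f·(f∘T^{ah})⦀_k^{2^k} ≤ |a| · ⦀f⦀_{k+1}^{2^{k+1}}. -/
open MeasureTheory Filter

/-- `hkPow μ T k f = ⦀f⦀_{k+1}^{2^{k+1}}`, the `2^{k+1}`-th power of the `(k+1)`-st Host–Kra
seminorm, defined recursively: `⦀f⦀₁ = |∫ f dμ|` (so `hkPow μ T 0 f = |∫ f dμ|²`) and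
`⦀f⦀_{k+1}^{2^{k+1}} = limsup_{H→∞} (1/H) ∑_{h=1}^H ⦀f·(f∘T^h)⦀_k^{2^k}`. -/
noncomputable def hkPow {X : Type*} [MeasurableSpace X] (μ : Measure X)
    (T : Equiv.Perm X) : ℕ → (X → ℝ) → ℝ
  | 0, f => |∫ x, f x ∂μ| ^ 2
  | (k + 1), f => limsup (fun H : ℕ => (1 / (H : ℝ)) * ∑ h ∈ Finset.Icc 1 H,
      hkPow μ T k (fun x => f x * f ((T ^ h) x))) atTop

section Aux

variable {X : Type*} [MeasurableSpace X]

/-- Bounds for Cesàro-type averages of a sequence with values in `[0, B]`. -/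
lemma avg_bounds (g : ℕ → ℝ) (B : ℝ) (hB : 0 ≤ B) (hg : ∀ n, 0 ≤ g n ∧ g n ≤ B) (H : ℕ) :
    0 ≤ (1 / (H : ℝ)) * ∑ h ∈ Finset.Icc 1 H, g h ∧
      (1 / (H : ℝ)) * ∑ h ∈ Finset.Icc 1 H, g h ≤ B := by
  constructor
  · exact mul_nonneg (by positivity) (Finset.sum_nonneg fun h _ => (hg h).1)
  · rcases Nat.eq_zero_or_pos H with rfl | hH
    · simpa using hB
    · have hsum : ∑ h ∈ Finset.Icc 1 H, g h ≤ (H : ℝ) * B := by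
        calc ∑ h ∈ Finset.Icc 1 H, g h ≤ ∑ _h ∈ Finset.Icc 1 H, B :=
              Finset.sum_le_sum fun h _ => (hg h).2
          _ = (H : ℝ) * B := by simp [Nat.card_Icc]
      have hHpos : (0 : ℝ) < (H : ℝ) := by exact_mod_cast hH
      calc (1 / (H : ℝ)) * ∑ h ∈ Finset.Icc 1 H, g h ≤ (1 / (H : ℝ)) * ((H : ℝ) * B) := by
            apply mul_le_mul_of_nonneg_left hsum (by positivity)
        _ = B := by field_simp

/-- `hkPow` is invariant under composition with a natural power of `T`. -/
lemma hkPow_comp_pow (μ : Measure X) [IsProbabilityMeasure μ] (T : Equiv.Perm X)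
    (hTm : Measurable ⇑T) (hTsymm : Measurable ⇑T.symm) (hmp : MeasurePreserving ⇑T μ μ)
    (n : ℕ) : ∀ (k : ℕ) (g : X → ℝ),
    hkPow μ T k (fun x => g ((T ^ n) x)) = hkPow μ T k g := by
  have hcoe : ⇑(T ^ n) = (⇑T)^[n] := rfl
  have hsymm : ⇑(T ^ n).symm = (⇑T.symm)^[n] := by
    have h1 : (T ^ n).symm = (T.symm) ^ n := by
      rw [← Equiv.Perm.inv_def]
      simp [← inv_pow, Equiv.Perm.inv_def]
    rw [h1]; rfl
  let E : X ≃ᵐ X :=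
    { toEquiv := (T ^ n : Equiv.Perm X)
      measurable_toFun := hTm.iterate n
      measurable_invFun := by
        show Measurable ⇑(T ^ n).symm
        rw [hsymm]
        exact hTsymm.iterate n }
  have hmpn : MeasurePreserving ⇑(T ^ n) μ μ := hmp.iterate n
  have key : ∀ (h : ℕ) (x : X), (T ^ h) ((T ^ n) x) = (T ^ n) ((T ^ h) x) := by
    intro h x
    rw [← Equiv.Perm.mul_apply, ← Equiv.Perm.mul_apply, pow_mul_comm]
  intro k
  induction k with
  | zero =>
    intro g
    simp only [hkPow]
    rw [hmpn.integral_comp E.measurableEmbedding g]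
  | succ k ih =>
    intro g
    simp only [hkPow]
    congr 1
    funext H
    congr 1
    apply Finset.sum_congr rfl
    intro h _
    rw [← ih (fun x => g x * g ((T ^ h) x))]
    congr 1
    funext x
    rw [key h x]

/-- `hkPow μ T k g` is nonnegative and bounded by `C ^ (2 ^ (k+1))` if `|g| ≤ C`. -/
lemma hkPow_bounds (μ : Measure X) [IsProbabilityMeasure μ] (T : Equiv.Perm X) :
    ∀ (k : ℕ) (g : X → ℝ) (C : ℝ), 0 ≤ C → (∀ x, |g x| ≤ C) →
    0 ≤ hkPow μ T k g ∧ hkPow μ T k g ≤ C ^ (2 ^ (k + 1)) := by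
  intro k
  induction k with
  | zero =>
    intro g C hC hg
    constructor
    · simp only [hkPow]; positivity
    · simp only [hkPow, pow_one]
      have h1 : |∫ x, g x ∂μ| ≤ C := by
        have := norm_integral_le_of_norm_le_const (μ := μ) (f := g) (C := C)
          (Eventually.of_forall fun x => by simpa using hg x)
        simpa using this
      calc |∫ x, g x ∂μ| ^ 2 ≤ C ^ 2 := by
            apply pow_le_pow_left₀ (abs_nonneg _) h1
        _ = C ^ (2 ^ (0 + 1)) := by norm_num
  | succ k ih =>
    intro g C hC hg
    set B : ℝ := (C ^ 2) ^ (2 ^ (k + 1)) with hBdef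
    have hB : 0 ≤ B := by positivity
    have hterm : ∀ h : ℕ, 0 ≤ hkPow μ T k (fun x => g x * g ((T ^ h) x)) ∧
        hkPow μ T k (fun x => g x * g ((T ^ h) x)) ≤ B := by
      intro h
      apply ih _ (C ^ 2) (by positivity)
      intro x
      rw [abs_mul, sq]
      exact mul_le_mul (hg x) (hg _) (abs_nonneg _) hC
    have havg := avg_bounds (fun h => hkPow μ T k (fun x => g x * g ((T ^ h) x))) B hB hterm
    have hBC : B = C ^ (2 ^ (k + 1 + 1)) := by
      rw [hBdef, ← pow_mul]
      congr 1
      rw [pow_succ]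
      ring
    constructor
    · exact le_limsup_of_frequently_le (Frequently.of_forall fun H => (havg H).1)
        (isBoundedUnder_of ⟨B, fun H => (havg H).2⟩)
    · rw [← hBC]
      apply limsup_le_of_le ?_ (Eventually.of_forall fun H => (havg H).2)
      exact isCoboundedUnder_le_of_le atTop fun H => (havg H).1

end Aux

/-- for an invertible ergodic `T`, a nonzero integer `a` and any positive integer
`k` (written here as `k + 1` with `k : ℕ`, and `⦀·⦀_{k+1}^{2^{k+1}} = hkPow μ T k`):
`limsup_{H→∞} (1/H) ∑_{h=1}^H ⦀f·(f∘T^{ah})⦀_{k+1}^{2^{k+1}} ≤ |a| ⦀f⦀_{k+2}^{2^{k+2}}`. -/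
theorem limsup_avg_hkPow_le
    {X : Type*} [MeasurableSpace X] (μ : Measure X) [IsProbabilityMeasure μ]
    (T : Equiv.Perm X) (hT : Ergodic (⇑T) μ) (hTsymm : Measurable ⇑T.symm)
    (f : X → ℝ) (hfm : Measurable f) (hfb : ∃ M : ℝ, ∀ x, |f x| ≤ M)
    (a : ℤ) (ha : a ≠ 0) (k : ℕ) :
    limsup (fun H : ℕ => (1 / (H : ℝ)) * ∑ h ∈ Finset.Icc 1 H,
        hkPow μ T k (fun x => f x * f ((T ^ (a * (h : ℤ))) x))) atTop
      ≤ |(a : ℝ)| * hkPow μ T (k + 1) f := by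
  obtain ⟨M, hM⟩ := hfb
  set C : ℝ := max M 0 with hCdef
  have hC : 0 ≤ C := le_max_right _ _
  have hfC : ∀ x, |f x| ≤ C := fun x => (hM x).trans (le_max_left _ _)
  have hmp : MeasurePreserving ⇑T μ μ := hT.toMeasurePreserving
  have hTm : Measurable ⇑T := hmp.measurable
  obtain ⟨b, hab⟩ : ∃ b : ℕ, a = (b : ℤ) ∨ a = -(b : ℤ) := ⟨a.natAbs, Int.natAbs_eq a⟩
  have hb : 0 < b := by rcases hab with h | h <;> omega
  set g : ℕ → ℝ := fun n => hkPow μ T k (fun x => f x * f ((T ^ n) x)) with hgdef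
  -- step A : rewrite the integrand via `g (b * h)`
  have key : ∀ h : ℕ, hkPow μ T k (fun x => f x * f ((T ^ (a * (h : ℤ))) x)) = g (b * h) := by
    intro h
    rcases hab with h1 | h1
    · have h2 : a * (h : ℤ) = ((b * h : ℕ) : ℤ) := by rw [h1]; push_cast; ring
      rw [hgdef]
      congr 1
      funext x
      rw [h2, zpow_natCast]
    · have h2 : a * (h : ℤ) = -((b * h : ℕ) : ℤ) := by rw [h1]; push_cast; ring
      have h3 : (T ^ (a * (h : ℤ))) = (T ^ (b * h) : Equiv.Perm X)⁻¹ := by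
        rw [h2, zpow_neg, zpow_natCast]
      set m : ℕ := b * h
      have e1 := (hkPow_comp_pow μ T hTm hTsymm hmp m k
        (fun y => f y * f ((T ^ m).symm y))).symm
      calc hkPow μ T k (fun x => f x * f ((T ^ (a * (h : ℤ))) x))
          = hkPow μ T k (fun y => f y * f ((T ^ m).symm y)) := by
            congr 1; funext x; rw [h3]; rfl
        _ = hkPow μ T k (fun x => f ((T ^ m) x) * f ((T ^ m).symm ((T ^ m) x))) := e1
        _ = g m := by
            rw [hgdef]
            congr 1
            funext x
            rw [Equiv.symm_apply_apply, mul_comm]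
  -- bounds on g
  set B : ℝ := (C ^ 2) ^ (2 ^ (k + 1)) with hBdef
  have hB : 0 ≤ B := by positivity
  have hgb : ∀ n, 0 ≤ g n ∧ g n ≤ B := by
    intro n
    apply hkPow_bounds μ T k _ (C ^ 2) (by positivity)
    intro x
    rw [abs_mul, sq]
    exact mul_le_mul (hfC x) (hfC _) (abs_nonneg _) hC
  set A : ℕ → ℝ := fun H => (1 / (H : ℝ)) * ∑ h ∈ Finset.Icc 1 H, g h with hAdef
  have hAb : ∀ H, 0 ≤ A H ∧ A H ≤ B := avg_bounds g B hB hgb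
  have hhk : hkPow μ T (k + 1) f = limsup A atTop := rfl
  set u : ℕ → ℝ := fun H => (1 / (H : ℝ)) * ∑ h ∈ Finset.Icc 1 H, g (b * h) with hudef
  have hLHS : (fun H : ℕ => (1 / (H : ℝ)) * ∑ h ∈ Finset.Icc 1 H,
      hkPow μ T k (fun x => f x * f ((T ^ (a * (h : ℤ))) x))) = u := by
    funext H
    rw [hudef]
    congr 1
    exact Finset.sum_congr rfl fun h _ => key h
  have hub : ∀ H, 0 ≤ u H ∧ u H ≤ B :=
    avg_bounds (fun h => g (b * h)) B hB (fun h => hgb _)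
  set φ : ℕ → ℕ := fun H => b * H with hφdef
  have hφmono : StrictMono φ := fun x y hxy => (Nat.mul_lt_mul_left hb).mpr hxy
  have hφtend : Tendsto φ atTop atTop := hφmono.tendsto_atTop
  set v : ℕ → ℝ := fun H => (b : ℝ) * A H with hvdef
  have hvb : ∀ H, 0 ≤ v H ∧ v H ≤ (b : ℝ) * B := by
    intro H
    refine ⟨mul_nonneg (by positivity) (hAb H).1, ?_⟩
    exact mul_le_mul_of_nonneg_left (hAb H).2 (by positivity)
  -- key pointwise inequality : u H ≤ v (φ H)
  have hkey : ∀ H, u H ≤ v (φ H) := by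
    intro H
    rcases Nat.eq_zero_or_pos H with rfl | hH
    · simp [hudef, hvdef, hφdef, hAdef]
    · have hHpos : (0 : ℝ) < (H : ℝ) := by exact_mod_cast hH
      have hinj : ∀ x ∈ Finset.Icc 1 H, ∀ y ∈ Finset.Icc 1 H, b * x = b * y → x = y := by
        intro x _ y _ hxy
        exact Nat.eq_of_mul_eq_mul_left hb hxy
      have himg : (Finset.Icc 1 H).image (fun h => b * h) ⊆ Finset.Icc 1 (b * H) := by
        intro m hm
        simp only [Finset.mem_image, Finset.mem_Icc] at hm ⊢
        obtain ⟨x, ⟨hx1, hx2⟩, rfl⟩ := hm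
        exact ⟨Nat.one_le_iff_ne_zero.mpr (Nat.mul_ne_zero hb.ne' (by omega)),
          Nat.mul_le_mul_left b hx2⟩
      have hsum : ∑ h ∈ Finset.Icc 1 H, g (b * h) ≤ ∑ m ∈ Finset.Icc 1 (b * H), g m := by
        rw [← Finset.sum_image hinj]
        exact Finset.sum_le_sum_of_subset_of_nonneg himg fun m _ _ => (hgb m).1
      have hval : v (φ H) = (b : ℝ) * ((1 / ((b * H : ℕ) : ℝ)) * ∑ m ∈ Finset.Icc 1 (b * H), g m) := rfl
      rw [hval]
      have hcast : ((b * H : ℕ) : ℝ) = (b : ℝ) * (H : ℝ) := by push_cast; ring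
      have hbpos : (0 : ℝ) < (b : ℝ) := by exact_mod_cast hb
      have hfrac : (b : ℝ) * (1 / ((b * H : ℕ) : ℝ)) = 1 / (H : ℝ) := by
        rw [hcast]; field_simp
      calc u H = (1 / (H : ℝ)) * ∑ h ∈ Finset.Icc 1 H, g (b * h) := rfl
        _ ≤ (1 / (H : ℝ)) * ∑ m ∈ Finset.Icc 1 (b * H), g m :=
            mul_le_mul_of_nonneg_left hsum (by positivity)
        _ = (b : ℝ) * (1 / ((b * H : ℕ) : ℝ)) * ∑ m ∈ Finset.Icc 1 (b * H), g m := by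
            rw [hfrac]
        _ = (b : ℝ) * ((1 / ((b * H : ℕ) : ℝ)) * ∑ m ∈ Finset.Icc 1 (b * H), g m) := by ring
  -- assemble
  rw [hLHS]
  have step1 : limsup u atTop ≤ limsup (v ∘ φ) atTop :=
    limsup_le_limsup (Eventually.of_forall hkey)
      (isCoboundedUnder_le_of_le atTop fun H => (hub H).1)
      (isBoundedUnder_of ⟨(b : ℝ) * B, fun H => (hvb (φ H)).2⟩)
  have step2 : limsup (v ∘ φ) atTop ≤ limsup v atTop := by
    rw [limsup_comp]
    exact limsup_le_limsup_of_le (map_le_iff_le_comap.mpr hφtend.le_comap)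
      (isCoboundedUnder_le_of_le (map φ atTop) fun H => (hvb H).1)
      (isBoundedUnder_of ⟨(b : ℝ) * B, fun H => (hvb H).2⟩)
  have step3 : limsup v atTop = (b : ℝ) * limsup A atTop := by
    have hmono : Monotone (fun x : ℝ => (b : ℝ) * x) := fun x y hxy =>
      mul_le_mul_of_nonneg_left hxy (by positivity)
    have hbdd : IsBoundedUnder (· ≤ ·) atTop A :=
      isBoundedUnder_of ⟨B, fun H => (hAb H).2⟩
    have hcob : IsCoboundedUnder (· ≤ ·) atTop A :=
      isCoboundedUnder_le_of_le atTop fun H => (hAb H).1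
    have hcont : ContinuousAt (fun x : ℝ => (b : ℝ) * x) (limsup A atTop) := by fun_prop
    have := hmono.map_limsup_of_continuousAt A hcont hbdd hcob
    rw [show v = (fun x : ℝ => (b : ℝ) * x) ∘ A from rfl, ← this]
  have habs : |(a : ℝ)| = (b : ℝ) := by
    rcases hab with h | h <;> rw [h] <;> push_cast <;> simp [abs_of_nonneg]
  rw [habs, hhk]
  calc limsup u atTop ≤ limsup (v ∘ φ) atTop := step1
    _ ≤ limsup v atTop := step2
    _ = (b : ℝ) * limsup A atTop := step3
end

section
/- Let (Y, 𝓖, ν) be a probability space, U : Y → Y a measure-preserving transformation, and f ∈ L^∞(ν) real-valued. Then the averages (1/H) ∑_{h=1}^{H} | ∫ f·(f∘U^{h}) dν |² converge as H → ∞, and their limit equals ∫∫ ( 𝔼(f⊗f | 𝓘²)(x,y) )² d(ν⊗ν)(x,y), where f⊗f(x,y) = f(x)f(y) and 𝓘² is the σ-algebra of (U×U)-invariant sets in Y×Y. In particular ‖⟨f⟩‖₂⁴ := lim_{H→∞} (1/H) ∑_{h=1}^{H} | ∫ f·(f∘U^{h}) dν |² is well defined and nonnegative. -/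
/-!
With `F = f ⊗ f ∈ L²(ν ⊗ ν)` and `K` the Koopman operator of `U × U`, Fubini gives
`|∫ f · f ∘ U^h dν|² = ⟪F, K^h F⟫`, so the `H`-th average is `⟪F, K (A_H F)⟫` where `A_H F` is the
`H`-th Birkhoff average of `F`. By von Neumann's mean ergodic theorem `A_H F` converges to the
orthogonal projection of `F` onto the fixed space of `K`. That fixed space is `L²` of the invariant
σ-algebra, because every a.e. invariant function has an exactly invariant version; hence the
projection is `c = 𝔼(F | 𝓘²)`, `K c = c`, and the limit is `⟪F, c⟫ = ‖c‖²`.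
-/

open MeasureTheory Filter

def invariantSigma {Y : Type*} [MeasurableSpace Y] (U : Y → Y) : MeasurableSpace Y where
  MeasurableSet' s := MeasurableSet s ∧ U ⁻¹' s = s
  measurableSet_empty := ⟨MeasurableSet.empty, rfl⟩
  measurableSet_compl s hs := ⟨hs.1.compl, by rw [Set.preimage_compl, hs.2]⟩
  measurableSet_iUnion s h := ⟨MeasurableSet.iUnion fun i => (h i).1, by
    rw [Set.preimage_iUnion]
    exact Set.iUnion_congr fun i => (h i).2⟩

open Function Topology MeasurableSpace
open scoped RealInnerProductSpace

section Invariants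

variable {α : Type*} [MeasurableSpace α] {μ : Measure α} {T : α → α}

lemma invariantSigma_eq_invariants : invariantSigma T = invariants T := rfl

lemma MeasureTheory.Measure.QuasiMeasurePreserving.comp_iterate_ae_eq {β : Type*}
    (hT : Measure.QuasiMeasurePreserving T μ μ) {g : α → β} (hgT : g ∘ T =ᵐ[μ] g) (n : ℕ) :
    g ∘ T^[n] =ᵐ[μ] g := by
  induction n with
  | zero => rfl
  | succ n ih =>
    rw [iterate_succ, ← Function.comp_assoc]
    exact (hT.ae_eq_comp ih).trans hgT

theorem exists_measurable_invariants_ae_eq (hT : Measure.QuasiMeasurePreserving T μ μ) {g : α → ℝ}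
    (hg : Measurable g) (hgT : g ∘ T =ᵐ[μ] g) :
    ∃ g' : α → ℝ, Measurable[invariants T] g' ∧ g' =ᵐ[μ] g := by
  -- a limsup along the orbit is exactly invariant, since it does not see a shift of the sequence
  set g' : α → ℝ := fun x => limsup (fun n => g (T^[n] x)) atTop
  have hg'T : g' ∘ T = g' := funext fun x => by
    simp only [g', comp_apply, ← iterate_succ_apply, ← limsup_nat_add (fun n => g (T^[n] x)) 1]
  refine ⟨g', measurable_invariants_dom.2 ⟨?_, fun s _ => by rw [hg'T]⟩, ?_⟩
  · exact Measurable.limsup fun n => hg.comp (hT.measurable.iterate n)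
  · filter_upwards [ae_all_iff.2 (hT.comp_iterate_ae_eq hgT)] with x hx
    simp only [comp_apply] at hx
    simp only [g', hx, limsup_const]

theorem aestronglyMeasurable_invariants_iff (hT : Measure.QuasiMeasurePreserving T μ μ)
    {g : α → ℝ} :
    AEStronglyMeasurable[invariants T] g μ ↔ AEStronglyMeasurable g μ ∧ g ∘ T =ᵐ[μ] g := by
  constructor
  · rintro ⟨g', hg', hgg'⟩
    refine ⟨⟨g', hg'.mono (invariants_le T), hgg'⟩, ?_⟩
    calc g ∘ T =ᵐ[μ] g' ∘ T := hT.ae_eq_comp hgg'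
      _ = g' := comp_eq_of_measurable_invariants hg'.measurable
      _ =ᵐ[μ] g := hgg'.symm
  · rintro ⟨hg, hgT⟩
    have hmkT : hg.mk g ∘ T =ᵐ[μ] hg.mk g :=
      ((hT.ae_eq_comp hg.ae_eq_mk.symm).trans hgT).trans hg.ae_eq_mk
    obtain ⟨g', hg', hg'g⟩ := exists_measurable_invariants_ae_eq hT hg.measurable_mk hmkT
    exact ⟨g', hg'.stronglyMeasurable, hg.ae_eq_mk.trans hg'g.symm⟩

end Invariants

section Koopman

variable {α : Type*} [MeasurableSpace α] {μ : Measure α} {T : α → α}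

noncomputable def koopman (hT : MeasurePreserving T μ μ) : Lp ℝ 2 μ →L[ℝ] Lp ℝ 2 μ :=
  (Lp.compMeasurePreservingₗᵢ ℝ T hT).toContinuousLinearMap

variable (hT : MeasurePreserving T μ μ)

lemma norm_koopman_le : ‖koopman hT‖ ≤ 1 :=
  LinearIsometry.norm_toContinuousLinearMap_le _

lemma coeFn_koopman (g : Lp ℝ 2 μ) : koopman hT g =ᵐ[μ] g ∘ T :=
  Lp.coeFn_compMeasurePreserving g hT

lemma coeFn_koopman_iterate (g : Lp ℝ 2 μ) (n : ℕ) : (koopman hT)^[n] g =ᵐ[μ] g ∘ T^[n] := by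
  induction n with
  | zero => rfl
  | succ n ih =>
    rw [iterate_succ_apply', iterate_succ, ← Function.comp_assoc]
    exact (coeFn_koopman hT _).trans (hT.quasiMeasurePreserving.ae_eq_comp ih)

lemma koopman_apply_eq_self_iff (g : Lp ℝ 2 μ) : koopman hT g = g ↔ g ∘ T =ᵐ[μ] g := by
  rw [Lp.ext_iff]
  exact ⟨(coeFn_koopman hT g).symm.trans, (coeFn_koopman hT g).trans⟩

theorem eqLocus_koopman :
    LinearMap.eqLocus (koopman hT : Lp ℝ 2 μ →ₗ[ℝ] Lp ℝ 2 μ) (1 : Lp ℝ 2 μ →L[ℝ] Lp ℝ 2 μ) =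
      lpMeas ℝ ℝ (invariants T) 2 μ := by
  ext g
  rw [LinearMap.mem_eqLocus, mem_lpMeas_iff_aestronglyMeasurable,
    aestronglyMeasurable_invariants_iff hT.quasiMeasurePreserving]
  simp only [ContinuousLinearMap.coe_coe, one_apply_eq_self, koopman_apply_eq_self_iff,
    Lp.aestronglyMeasurable g, true_and]

lemma koopman_condExpL2 (g : Lp ℝ 2 μ) :
    koopman hT (condExpL2 ℝ ℝ (invariants_le T) g) = condExpL2 ℝ ℝ (invariants_le T) g :=
  LinearMap.mem_eqLocus.1 ((eqLocus_koopman hT).ge (condExpL2 ℝ ℝ (invariants_le T) g).2)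

theorem tendsto_birkhoffAverage_koopman (g : Lp ℝ 2 μ) :
    Tendsto (birkhoffAverage ℝ (koopman hT) id · g) atTop
      (𝓝 (condExpL2 ℝ ℝ (invariants_le T) g : Lp ℝ 2 μ)) := by
  convert (koopman hT).tendsto_birkhoffAverage_orthogonalProjection (norm_koopman_le hT) g using 2
  -- `rw [eqLocus_koopman]` fails: the projection's instance argument depends on the submodule
  have starProjection_congr {K₁ K₂ : Submodule ℝ (Lp ℝ 2 μ)} [K₁.HasOrthogonalProjection]
      [K₂.HasOrthogonalProjection] (h : K₁ = K₂) : K₁.starProjection g = K₂.starProjection g := by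
    subst h; rfl
  have : Fact (invariants T ≤ ‹MeasurableSpace α›) := ⟨invariants_le T⟩
  exact starProjection_congr (eqLocus_koopman hT).symm

lemma inner_toLp_koopman_iterate {g : α → ℝ} (hg : MemLp g 2 μ) (n : ℕ) :
    ⟪hg.toLp g, (koopman hT)^[n] (hg.toLp g)⟫ = ∫ x, g x * g (T^[n] x) ∂μ := by
  rw [L2.inner_def]
  refine integral_congr_ae ?_
  filter_upwards [hg.coeFn_toLp, coeFn_koopman_iterate hT (hg.toLp g) n,
    (hT.iterate n).quasiMeasurePreserving.ae_eq_comp hg.coeFn_toLp] with x hx hxn hxT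
  simp only [comp_apply] at hxn hxT
  rw [hxn, hxT, hx, real_inner_eq_re_inner, RCLike.inner_apply, conj_trivial, mul_comm]
  rfl

end Koopman

section InnerProduct

variable {E : Type*} [NormedAddCommGroup E] [InnerProductSpace ℝ E]

lemma inner_apply_birkhoffAverage (K : E →L[ℝ] E) (x y : E) (H : ℕ) :
    ⟪x, K (birkhoffAverage ℝ K id H y)⟫ = (1 / (H : ℝ)) * ∑ h ∈ Finset.Icc 1 H, ⟪x, K^[h] y⟫ := by
  rw [birkhoffAverage, birkhoffSum, map_smul, real_inner_smul_right, map_sum, inner_sum, one_div,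
    ← Finset.Ico_add_one_right_eq_Icc, Finset.sum_Ico_eq_sum_range]
  simp only [id, ← iterate_succ_apply' K, add_comm 1, Nat.add_sub_cancel]

theorem tendsto_avg_inner_iterate {K : E →L[ℝ] E} {x y z : E}
    (h : Tendsto (birkhoffAverage ℝ K id · y) atTop (𝓝 z)) :
    Tendsto (fun H : ℕ => (1 / (H : ℝ)) * ∑ h ∈ Finset.Icc 1 H, ⟪x, K^[h] y⟫) atTop
      (𝓝 ⟪x, K z⟫) := by
  simp only [← inner_apply_birkhoffAverage]
  exact tendsto_const_nhds.inner ((K.continuous.tendsto z).comp h)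

end InnerProduct

lemma inner_toLp_condExpL2 {α : Type*} {m m₀ : MeasurableSpace α} {μ : Measure α} (hm : m ≤ m₀)
    [IsFiniteMeasure μ] {g : α → ℝ} (hg : MemLp g 2 μ) :
    ⟪hg.toLp g, ((condExpL2 ℝ ℝ hm (hg.toLp g) : lpMeas ℝ ℝ m 2 μ) : Lp ℝ 2 μ)⟫ =
      ∫ x, (μ[g|m] x) ^ 2 ∂μ := by
  rw [← inner_condExpL2_eq_inner_fun hm _ _ (aestronglyMeasurable_condExpL2 hm _), L2.inner_def]
  refine integral_congr_ae ?_
  filter_upwards [hg.condExpL2_ae_eq_condExp (𝕜 := ℝ) hm] with x hx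
  rw [hx, real_inner_eq_re_inner, RCLike.inner_apply, conj_trivial, sq]
  rfl

lemma integral_prod_mul_prodMap_iterate {Y : Type*} [MeasurableSpace Y] (ν : Measure Y) [SFinite ν]
    (U : Y → Y) (f : Y → ℝ) (n : ℕ) :
    ∫ q, (f q.1 * f q.2) * (f ((Prod.map U U)^[n] q).1 * f ((Prod.map U U)^[n] q).2) ∂ν.prod ν =
      (∫ y, f y * f (U^[n] y) ∂ν) ^ 2 := by
  simp only [Prod.map_iterate, Prod.map_fst, Prod.map_snd, sq, ← integral_prod_mul]
  congr with q
  ring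

/-- for a measure-preserving `U` on a probability space and bounded measurable
real `f`, the averages `(1/H) ∑_{h=1}^H |∫ f·(f∘U^h) dν|²` converge, with limit
`∫∫ (𝔼(f⊗f | 𝓘²))² d(ν⊗ν)`, where `𝓘²` is the σ-algebra of `U×U`-invariant sets.
In particular `‖⟨f⟩‖₂⁴` is well defined and nonnegative. -/
theorem tendsto_avg_sq_correlations_eq_integral_condexp_sq
    {Y : Type*} [MeasurableSpace Y] (ν : Measure Y) [IsProbabilityMeasure ν]
    (U : Y → Y) (hU : MeasurePreserving U ν ν)
    (f : Y → ℝ) (hfm : Measurable f) (hfb : ∃ M : ℝ, ∀ y, |f y| ≤ M) :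
    Tendsto (fun H : ℕ => (1 / (H : ℝ)) * ∑ h ∈ Finset.Icc 1 H,
        |∫ y, f y * f (U^[h] y) ∂ν| ^ 2) atTop
      (nhds (∫ p, (MeasureTheory.condExp (invariantSigma (Prod.map U U)) (ν.prod ν)
          (fun q : Y × Y => f q.1 * f q.2) p) ^ 2 ∂(ν.prod ν))) := by
  obtain ⟨M, hM⟩ := hfb
  have hT : MeasurePreserving (Prod.map U U) (ν.prod ν) (ν.prod ν) := hU.prod hU
  have hF : MemLp (fun q : Y × Y => f q.1 * f q.2) 2 (ν.prod ν) := by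
    refine (memLp_top_of_bound ?_ (M * M) (Eventually.of_forall fun q => ?_)).mono_exponent le_top
    · exact ((hfm.comp measurable_fst).mul (hfm.comp measurable_snd)).aestronglyMeasurable
    · rw [Real.norm_eq_abs, abs_mul]
      exact mul_le_mul (hM _) (hM _) (abs_nonneg _) ((abs_nonneg _).trans (hM q.1))
  have hcorr (h : ℕ) :
      |∫ y, f y * f (U^[h] y) ∂ν| ^ 2 = ⟪hF.toLp _, (koopman hT)^[h] (hF.toLp _)⟫ := by
    rw [sq_abs, inner_toLp_koopman_iterate, integral_prod_mul_prodMap_iterate]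
  simp only [hcorr, invariantSigma_eq_invariants, ← inner_toLp_condExpL2 (invariants_le _) hF]
  rw [← koopman_condExpL2 hT]
  exact tendsto_avg_inner_iterate (tendsto_birkhoffAverage_koopman hT _)
end
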